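/- arXiv:math/0409028 — 12 statements merged into one kernel-verified Lean document; each statement's English description precedes it below -/
import Mathlib

section
/- For any flag (S_0, S_1, ..., S_r) on a finite set S, the family I = { I ⊆ S : |I ∩ S_i| ≤ i for all 0 ≤ i ≤ r } is the collection of independent sets of a matroid on S, and this matroid has rank r. -/
/-!
The constraints `|I ∩ Fᵢ| ≤ i` come from a chain of sets, and any chain of sets with
capacities defines a matroid. For augmentation, suppose no `e ∈ J \ I` can be added to `I`:
then each such `e` lies in some `Fᵢ` on which `I` is tight. Taking the largest of these
indices `k`, the whole of `J \ I` lies in `F k`, so `J` has no more elements than `I` inside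
`F k` (where `I` is tight) and no more outside it (where `J ⊆ I`), contradicting `|I| < |J|`.
For the rank, picking one element of each `Fᵢ₊₁ \ Fᵢ` gives an independent set of size `r`,
and no independent set is larger since `F r = S`.
-/

open Set

theorem Set.ncard_le_ncard_of_sdiff_subset {α : Type*} {I J X : Set α} (hI : I.Finite)
    (hJ : J.Finite) (hJI : J \ I ⊆ X) (hX : (J ∩ X).ncard ≤ (I ∩ X).ncard) : J.ncard ≤ I.ncard := by
  have hout : (J \ X).ncard ≤ (I \ X).ncard :=
    ncard_le_ncard (fun e ⟨heJ, heX⟩ ↦ ⟨by_contra fun heI ↦ heX (hJI ⟨heJ, heI⟩), heX⟩) hI.sdiff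
  rw [← ncard_inter_add_ncard_sdiff_eq_ncard J X hJ, ← ncard_inter_add_ncard_sdiff_eq_ncard I X hI]
  omega

section ChainCapacity

variable {α ι : Type*} {S I J : Set α} {s : Set ι} {F : ι → Set α} {c : ι → ℕ}

def CapacityIndep (S : Set α) (s : Set ι) (F : ι → Set α) (c : ι → ℕ) (I : Set α) : Prop :=
  I ⊆ S ∧ ∀ i ∈ s, (I ∩ F i).ncard ≤ c i

theorem CapacityIndep.empty : CapacityIndep S s F c ∅ :=
  ⟨empty_subset S, fun i _ ↦ by simp⟩

theorem CapacityIndep.subset (hS : S.Finite) (hJ : CapacityIndep S s F c J) (hIJ : I ⊆ J) :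
    CapacityIndep S s F c I :=
  ⟨hIJ.trans hJ.1, fun i hi ↦ (ncard_le_ncard (inter_subset_inter_left _ hIJ)
    ((hS.subset hJ.1).inter_of_left _)).trans (hJ.2 i hi)⟩

theorem CapacityIndep.exists_tight_of_not_insert {e : α} (hI : CapacityIndep S s F c I)
    (he : e ∈ S) (hnot : ¬ CapacityIndep S s F c (insert e I)) :
    ∃ i ∈ s, e ∈ F i ∧ (I ∩ F i).ncard = c i := by
  obtain ⟨i, hi, hlt⟩ : ∃ i ∈ s, c i < (insert e I ∩ F i).ncard := by
    simpa [CapacityIndep, insert_subset he hI.1] using hnot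
  have heF : e ∈ F i := by
    by_contra heF
    rw [insert_inter_of_notMem heF] at hlt
    exact (hI.2 i hi).not_gt hlt
  rw [insert_inter_of_mem heF] at hlt
  have := ncard_insert_le e (I ∩ F i)
  exact ⟨i, hi, heF, le_antisymm (hI.2 i hi) (by omega)⟩

theorem CapacityIndep.exists_insert_of_ncard_lt [LinearOrder ι] (hS : S.Finite)
    (hF : MonotoneOn F s) (hI : CapacityIndep S s F c I)
    (hJ : CapacityIndep S s F c J) (hlt : I.ncard < J.ncard) :
    ∃ e ∈ J, e ∉ I ∧ CapacityIndep S s F c (insert e I) := by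
  by_contra! hcon
  have hIfin := hS.subset hI.1
  have hJfin := hS.subset hJ.1
  choose t hts hmem htight using fun e (he : e ∈ J \ I) ↦
    hI.exists_tight_of_not_insert (hJ.1 he.1) (hcon e he.1 he.2)
  have : Finite ↥(J \ I) := hJfin.sdiff.to_subtype
  have : Nonempty ↥(J \ I) := (sdiff_nonempty_of_ncard_lt_ncard hlt hIfin).to_subtype
  obtain ⟨⟨k, hk⟩, hmax⟩ := Finite.exists_max fun e : ↥(J \ I) ↦ t e e.2
  have hsub : J \ I ⊆ F (t k hk) := fun e he ↦
    hF (hts e he) (hts k hk) (hmax ⟨e, he⟩) (hmem e he)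
  have hle := ncard_le_ncard_of_sdiff_subset hIfin hJfin hsub
    (by rw [htight k hk]; exact hJ.2 _ (hts k hk))
  omega

def capacityMatroid [LinearOrder ι] (hS : S.Finite) (hF : MonotoneOn F s) (c : ι → ℕ) :
    Matroid α :=
  (IndepMatroid.ofFinite hS (CapacityIndep S s F c) CapacityIndep.empty
    (fun _ _ hJ hIJ ↦ hJ.subset hS hIJ) (fun _ _ hI hJ ↦ hI.exists_insert_of_ncard_lt hS hF hJ)
    fun _ hI ↦ hI.1).matroid

theorem capacityMatroid_isBase_of_ncard_eq [LinearOrder ι] {i : ι} {B : Set α} (hS : S.Finite)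
    (hF : MonotoneOn F s) (hi : i ∈ s) (hSF : S ⊆ F i) (hB : CapacityIndep S s F c B)
    (hBc : B.ncard = c i) : (capacityMatroid hS hF c).IsBase B := by
  refine Matroid.Indep.isBase_of_maximal hB fun J (hJ : CapacityIndep S s F c J) hBJ ↦ ?_
  have hJc := hJ.2 i hi
  rw [inter_eq_left.2 (hJ.1.trans hSF)] at hJc
  exact eq_of_subset_of_ncard_le hBJ (by omega) (hS.subset hJ.1)

end ChainCapacity

section Flag

variable {α : Type*} {F : ℕ → Set α} {r : ℕ}

theorem monotoneOn_Iic_of_ssubset_succ (h : ∀ i < r, F i ⊂ F (i + 1)) :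
    MonotoneOn F (Iic r) :=
  monotoneOn_of_le_succ ordConnected_Iic fun i _ _ hi ↦ by
    rw [Order.succ_eq_add_one] at hi ⊢
    exact (h i hi).subset

theorem exists_ncard_inter_eq_of_ssubset_succ (h : ∀ i < r, F i ⊂ F (i + 1)) :
    ∃ B ⊆ F r, B.Finite ∧ ∀ j ≤ r, (B ∩ F j).ncard = j := by
  induction r with
  | zero => exact ⟨∅, empty_subset _, finite_empty, fun j hj ↦ by simp [Nat.le_zero.1 hj]⟩
  | succ r ih =>
    obtain ⟨B, hBF, hBfin, hB⟩ := ih fun i hi ↦ h i (by omega)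
    obtain ⟨x, hxF, hxF'⟩ := exists_of_ssubset (h r (lt_add_one r))
    have hBx : insert x B ⊆ F (r + 1) := insert_subset hxF (hBF.trans (h r (lt_add_one r)).subset)
    refine ⟨insert x B, hBx, hBfin.insert x, fun j hj ↦ ?_⟩
    rcases hj.lt_or_eq with hj | rfl
    · have hxj : x ∉ F j := fun hx ↦ hxF' <|
        monotoneOn_Iic_of_ssubset_succ h hj.le r.le_succ (Nat.le_of_lt_succ hj) hx
      rw [insert_inter_of_notMem hxj]
      exact hB j (by omega)
    · have hBr := hB r le_rfl
      rw [inter_eq_left.2 hBF] at hBr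
      rw [inter_eq_left.2 hBx, ncard_insert_of_notMem (fun hx ↦ hxF' (hBF hx)) hBfin, hBr]

end Flag

/-- For any flag `(S₀, S₁, …, S_r)` on a finite set `S`, the family
`{ I ⊆ S : |I ∩ Sᵢ| ≤ i for all 0 ≤ i ≤ r }` is the collection of independent sets
of a matroid on `S`, and this matroid has rank `r`. -/
theorem freedom_matroid_exists {α : Type*} (S : Set α) (hS : S.Finite) (r : ℕ)
    (F : ℕ → Set α) (hFr : F r = S) (hchain : ∀ i < r, F i ⊂ F (i + 1)) :
    ∃ M : Matroid α, M.E = S ∧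
      (∀ I : Set α, M.Indep I ↔ I ⊆ S ∧ ∀ i ≤ r, (I ∩ F i).ncard ≤ i) ∧
      (∃ B : Set α, M.IsBase B ∧ B.ncard = r) := by
  have hF := monotoneOn_Iic_of_ssubset_succ hchain
  obtain ⟨B, hBF, -, hB⟩ := exists_ncard_inter_eq_of_ssubset_succ hchain
  have hBS : B ⊆ S := hFr ▸ hBF
  have hBr : B.ncard = r := by rw [← hB r le_rfl, inter_eq_left.2 hBF]
  have hBindep : CapacityIndep S (Iic r) F id B := ⟨hBS, fun i hi ↦ (hB i hi).le⟩
  refine ⟨capacityMatroid hS hF id, rfl, fun I ↦ Iff.rfl, B, ?_, hBr⟩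
  exact capacityMatroid_isBase_of_ncard_eq hS hF self_mem_Iic hFr.ge hBindep hBr
end

section
/- Let M = M(S_0,...,S_r) be a freedom matroid on S, let e ∈ S, and set T_i = S_i \ {e} for all i. Then: (1) a set I ⊆ S \ {e} is independent in the deletion M\e if and only if |I ∩ T_i| ≤ i for all 0 ≤ i ≤ r; (2) if e is a loop of M then M/e = M\e; and (3) if e is not a loop and k = min{ i : e ∈ S_i }, then a set I ⊆ S \ {e} is independent in the contraction M/e if and only if |I ∩ T_i| ≤ i for 0 ≤ i ≤ k-2 and |I ∩ T_i| ≤ i-1 for k ≤ i ≤ r. -/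
/-!
The matroid `N` is the contraction `M ／ {e}`, since independence of `I ∪ J` does not depend on
the basis `J` of `{e}`. Contracting a loop is deleting it; for a nonloop `e`, `I` is independent
in `M ／ {e}` iff `insert e I` is independent in `M`. Adding `e` raises `|I ∩ Sᵢ|` by one exactly
for `i ≥ k`, which lowers the bounds there to `i - 1`; the bound at `i = k - 1` is implied by the
one at `k` because the flag is increasing.
-/

open Matroid Set

theorem Matroid.eq_contract_of_indep_iff {α : Type*} {M N : Matroid α} {C : Set α}
    (hNE : N.E = M.E \ C)
    (hNInd : ∀ I, N.Indep I ↔ I ⊆ M.E \ C ∧ ∃ J ⊆ C, M.IsBasis J C ∧ M.Indep (I ∪ J)) :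
    N = M ／ C := by
  refine ext_indep hNE fun I _ ↦ ?_
  rw [hNInd]
  constructor
  · rintro ⟨hI, J, -, hJ, hIJ⟩
    exact hJ.contract_indep_iff.2 ⟨hIJ, (subset_sdiff.1 hI).2.symm⟩
  · intro hI
    -- `C` has a basis because `N` has the independent set `∅`.
    obtain ⟨-, J, -, hJ, -⟩ := (hNInd ∅).1 N.empty_indep
    exact ⟨hI.subset_ground, J, hJ.subset, hJ, (hJ.contract_indep_iff.1 hI).1⟩

theorem Set.inter_sdiff_singleton_of_notMem {α : Type*} {I A : Set α} {e : α} (h : e ∉ I) :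
    I ∩ (A \ {e}) = I ∩ A := by
  rw [← inter_sdiff_assoc, sdiff_singleton_eq_self fun h' ↦ h h'.1]

theorem Set.ncard_insert_inter_of_mem {α : Type*} {I A : Set α} {e : α} (hI : I.Finite)
    (heI : e ∉ I) (heA : e ∈ A) : (insert e I ∩ A).ncard = (I ∩ A).ncard + 1 := by
  rw [insert_inter_of_mem heA, ncard_insert_of_notMem (fun h ↦ heI h.1) (hI.inter_of_left A)]

theorem forall_ncard_insert_inter_le_iff {α : Type*} {F : ℕ → Set α} {r k : ℕ} {I : Set α}
    {e : α} (hF : MonotoneOn F (Iic r)) (hI : I.Finite) (heI : e ∉ I) (hk : 0 < k)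
    (hkr : k ≤ r) (hek : e ∈ F k) (hlt : ∀ i < k, e ∉ F i) :
    (∀ i ≤ r, (insert e I ∩ F i).ncard ≤ i) ↔
      (∀ i, i + 2 ≤ k → (I ∩ F i).ncard ≤ i) ∧ (∀ i, k ≤ i → i ≤ r → (I ∩ F i).ncard ≤ i - 1) := by
  have hmem {i} (hki : k ≤ i) (hir : i ≤ r) : e ∈ F i := hF (mem_Iic.2 hkr) (mem_Iic.2 hir) hki hek
  constructor
  · intro h
    refine ⟨fun i hik ↦ ?_, fun i hki hir ↦ ?_⟩
    · simpa [insert_inter_of_notMem (hlt i (by omega))] using h i (by omega)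
    · have := h i hir
      rw [ncard_insert_inter_of_mem hI heI (hmem hki hir)] at this
      omega
  · rintro ⟨hbelow, habove⟩ i hir
    rcases lt_or_ge i k with hik | hki
    · rw [insert_inter_of_notMem (hlt i hik)]
      rcases lt_or_ge (i + 1) k with hik' | hik'
      · exact hbelow i hik'
      · -- `i = k - 1`: no bound on `F i` is given, so pass to `F k ⊇ F i`.
        calc (I ∩ F i).ncard ≤ (I ∩ F k).ncard :=
              ncard_le_ncard (inter_subset_inter_right I
                (hF (mem_Iic.2 hir) (mem_Iic.2 hkr) hik.le)) (hI.inter_of_left _)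
          _ ≤ k - 1 := habove k le_rfl hkr
          _ = i := by omega
    · have := habove i hki hir
      rw [ncard_insert_inter_of_mem hI heI (hmem hki hir)]
      omega

/-- Let `M = M(S₀,…,S_r)` be a freedom matroid on `S`, let `e ∈ S`, and set
`Tᵢ = Sᵢ \ {e}`.  Then:
(1) a set `I ⊆ S \ {e}` is independent in the deletion `M \ e` (the restriction of `M` to
    `S \ {e}`) iff `|I ∩ Tᵢ| ≤ i` for all `0 ≤ i ≤ r`;
(2) if `e` is a loop of `M` then `M/e = M\e`;
(3) if `e` is not a loop and `k = min { i : e ∈ Sᵢ }`, then `I ⊆ S \ {e}` is independent in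
    the contraction `M/e` iff `|I ∩ Tᵢ| ≤ i` for `0 ≤ i ≤ k-2` and `|I ∩ Tᵢ| ≤ i-1` for
    `k ≤ i ≤ r`.
Here the contraction `M/e` is any matroid `N` with ground set `S \ {e}` in which a set `I`
is independent iff `I ⊆ S \ {e}` and `I ∪ J` is independent in `M` for some basis `J`
of `{e}` in `M`. -/
theorem freedom_matroid_delete_contract {α : Type*} (S : Set α) (hS : S.Finite) (r : ℕ)
    (F : ℕ → Set α) (hFr : F r = S) (hchain : ∀ i < r, F i ⊂ F (i + 1))
    (M : Matroid α) (hE : M.E = S)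
    (hInd : ∀ I : Set α, M.Indep I ↔ I ⊆ S ∧ ∀ i ≤ r, (I ∩ F i).ncard ≤ i)
    (e : α) (he : e ∈ S)
    (N : Matroid α) (hNE : N.E = S \ {e})
    (hNInd : ∀ I : Set α, N.Indep I ↔ I ⊆ S \ {e} ∧
      ∃ J ⊆ ({e} : Set α), M.IsBasis J {e} ∧ M.Indep (I ∪ J)) :
    (∀ I : Set α, (M ↾ (S \ {e})).Indep I ↔
        I ⊆ S \ {e} ∧ ∀ i ≤ r, (I ∩ (F i \ {e})).ncard ≤ i) ∧
    (¬ M.Indep {e} → N = M ↾ (S \ {e})) ∧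
    (∀ k : ℕ, M.Indep {e} → e ∈ F k → (∀ i < k, e ∉ F i) →
      ∀ I : Set α, N.Indep I ↔ I ⊆ S \ {e} ∧
        (∀ i : ℕ, i + 2 ≤ k → (I ∩ (F i \ {e})).ncard ≤ i) ∧
        (∀ i : ℕ, k ≤ i → i ≤ r → (I ∩ (F i \ {e})).ncard ≤ i - 1)) := by
  subst hE
  have hN : N = M ／ {e} := eq_contract_of_indep_iff hNE hNInd
  have hF : MonotoneOn F (Iic r) :=
    monotoneOn_of_le_add_one ordConnected_Iic fun i _ _ hi ↦ (hchain i hi).le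
  refine ⟨fun I ↦ ?_, fun hloop ↦ ?_, fun k hek hFk hlt I ↦ ?_⟩
  · rw [restrict_indep_iff, hInd, and_comm, and_congr_right_iff]
    intro hI
    have heI : e ∉ I := fun h ↦ (hI h).2 rfl
    simp only [inter_sdiff_singleton_of_notMem heI, hI.trans sdiff_subset, true_and]
  · rw [hN, contract_eq_delete_of_subset_loops
      (singleton_subset_iff.2 ((singleton_not_indep he).1 hloop)), delete_eq_restrict]
  · have hk : 0 < k := Nat.pos_of_ne_zero fun hk0 ↦ by
      simpa [hk0 ▸ hFk] using ((hInd {e}).1 hek).2 0 r.zero_le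
    have hkr : k ≤ r := not_lt.1 fun hrk ↦ hlt r hrk (hFr ▸ he)
    have hcount {I} (hI : I ⊆ M.E) (heI : e ∉ I) :=
      forall_ncard_insert_inter_le_iff hF (hS.subset hI) heI hk hkr hFk hlt
    rw [hN, (indep_singleton.1 hek).contractElem_indep_iff, hInd, insert_subset_iff,
      subset_sdiff, disjoint_singleton_right]
    constructor
    · rintro ⟨heI, ⟨-, hI⟩, h⟩
      simp only [inter_sdiff_singleton_of_notMem heI]
      exact ⟨⟨hI, heI⟩, (hcount hI heI).1 h⟩
    · rintro ⟨⟨hI, heI⟩, h⟩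
      simp only [inter_sdiff_singleton_of_notMem heI] at h
      exact ⟨heI, ⟨he, hI⟩, (hcount hI heI).2 h⟩
end

section
/- The class of freedom matroids is minor-closed: for any freedom matroid M = M(S_0,...,S_r) on S and any e ∈ S, both the deletion M\e and the contraction M/e are freedom matroids (each is the freedom matroid of a flag on S \ {e}). -/
/-!
Deleting `e` turns the constraints into `|I ∩ (Sᵢ \ {e})| ≤ i`; contracting a nonloop `e` that
first appears in `S_{k+1}` turns them into `|I ∩ Sᵢ| ≤ i` for `i < k` and
`|I ∩ (S_{i+1} \ {e})| ≤ i` for `i ≥ k`; contracting a loop is deleting it. The deletion chain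
is only weakly increasing (`Sₖ \ {e} = S_{k+1} \ {e}` when `S_{k+1} = Sₖ ∪ {e}`), but any weakly
increasing chain can be made strict without changing the constraints: going up one level at a
time, add the new elements one by one as coloops, each on a level of its own, then truncate at
the new level.
-/

open Matroid Set

section FreedomConstraints

variable {α : Type*}

def FreedomIndep (F : ℕ → Set α) (r : ℕ) (I : Set α) : Prop :=
  ∀ i ≤ r, (I ∩ F i).ncard ≤ i

def IsFlag (F : ℕ → Set α) (r : ℕ) : Prop :=
  ∀ i < r, F i ⊂ F (i + 1)

lemma freedomIndep_succ_iff {F : ℕ → Set α} {r : ℕ} {I : Set α} :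
    FreedomIndep F (r + 1) I ↔ FreedomIndep F r I ∧ (I ∩ F (r + 1)).ncard ≤ r + 1 :=
  ⟨fun h => ⟨fun i hi => h i (by omega), h _ le_rfl⟩,
    fun ⟨h, htop⟩ i hi => (Nat.le_succ_iff.1 hi).elim (h i) fun hi => hi ▸ htop⟩

lemma freedomIndep_congr {F G : ℕ → Set α} {r : ℕ} (h : ∀ i ≤ r, F i = G i) (I : Set α) :
    FreedomIndep F r I ↔ FreedomIndep G r I :=
  forall₂_congr fun i hi => by rw [h i hi]

lemma IsFlag.subset {F : ℕ → Set α} {r i : ℕ} (hF : IsFlag F r) (hi : i ≤ r) : F i ⊆ F r := by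
  induction r, hi using Nat.le_induction with
  | base => rfl
  | succ r _ ih => exact (ih fun j hj => hF j (by omega)).trans (hF r r.lt_succ_self).subset

lemma ncard_inter_insert_le (s t : Set α) (a : α) :
    (s ∩ insert a t).ncard ≤ (s ∩ t).ncard + 1 := by
  by_cases ha : a ∈ s
  · rw [inter_insert_of_mem ha]
    exact ncard_insert_le a _
  · rw [inter_insert_of_notMem ha]
    omega

lemma IsFlag.exists_insert {G : ℕ → Set α} {R : ℕ} (hG : IsFlag G R) {x : α} (hx : x ∉ G R) :
    ∃ G' : ℕ → Set α, G' (R + 1) = insert x (G R) ∧ IsFlag G' (R + 1) ∧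
      ∀ I, FreedomIndep G' (R + 1) I ↔ FreedomIndep G R I := by
  set G' : ℕ → Set α := fun i => if i ≤ R then G i else insert x (G R)
  have hlow : ∀ i ≤ R, G' i = G i := fun i hi => if_pos hi
  have htop : G' (R + 1) = insert x (G R) := if_neg (by omega)
  refine ⟨G', htop, fun i hi => ?_, fun I => ?_⟩
  · rcases Nat.lt_succ_iff_lt_or_eq.1 hi with hi | rfl
    · rw [hlow i hi.le, hlow (i + 1) hi]
      exact hG i hi
    · rw [hlow i le_rfl, htop]
      exact ssubset_insert hx
  · rw [freedomIndep_succ_iff, freedomIndep_congr hlow, htop, and_iff_left_iff_imp]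
    exact fun h => (ncard_inter_insert_le I (G R) x).trans (Nat.succ_le_succ (h R le_rfl))

lemma IsFlag.exists_union {G : ℕ → Set α} {R : ℕ} (hG : IsFlag G R) {D : Set α}
    (hD : D.Finite) (hGD : Disjoint (G R) D) :
    ∃ (R' : ℕ) (G' : ℕ → Set α), G' R' = G R ∪ D ∧ IsFlag G' R' ∧
      ∀ I, FreedomIndep G' R' I ↔ FreedomIndep G R I := by
  induction D, hD using Set.Finite.induction_on with
  | empty => exact ⟨R, G, (union_empty _).symm, hG, fun _ => Iff.rfl⟩
  | @insert x D hxD _ ih =>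
    obtain ⟨R', G', hG'top, hG', hG'G⟩ := ih (hGD.mono_right (subset_insert x D))
    have hx : x ∉ G' R' := by
      rw [hG'top]
      exact fun h => h.elim (disjoint_left.1 hGD · (mem_insert x D)) hxD
    obtain ⟨G'', hG''top, hG'', hG''G'⟩ := hG'.exists_insert hx
    exact ⟨R' + 1, G'', by rw [hG''top, hG'top, union_insert], hG'',
      fun I => (hG''G' I).trans (hG'G I)⟩

lemma IsFlag.exists_truncate {G : ℕ → Set α} {R : ℕ} (hG : IsFlag G R) (hfin : (G R).Finite)
    (k : ℕ) :
    ∃ (r : ℕ) (G' : ℕ → Set α), G' r = G R ∧ IsFlag G' r ∧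
      ∀ I, FreedomIndep G' r I ↔ FreedomIndep G R I ∧ (I ∩ G R).ncard ≤ k := by
  rcases le_or_gt R k with hRk | hkR
  · exact ⟨R, G, rfl, hG, fun I => ⟨fun h => ⟨h, (h R le_rfl).trans hRk⟩, And.left⟩⟩
  set G' : ℕ → Set α := fun i => if i < k then G i else G R
  have hlow : ∀ i < k, G' i = G i := fun i hi => if_pos hi
  have htop : G' k = G R := if_neg (lt_irrefl k)
  refine ⟨k, G', htop, fun i hi => ?_, fun I => ⟨fun h => ?_, fun ⟨h, hk⟩ i hi => ?_⟩⟩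
  · rw [hlow i hi]
    rcases Nat.lt_or_ge (i + 1) k with hi' | hi'
    · rw [hlow _ hi']
      exact hG i (by omega)
    · rw [show G' (i + 1) = G R from if_neg (by omega)]
      exact (hG i (by omega)).trans_subset (hG.subset (by omega))
  · have hk : (I ∩ G R).ncard ≤ k := htop ▸ h k le_rfl
    refine ⟨fun i hi => ?_, hk⟩
    rcases Nat.lt_or_ge i k with hik | hki
    · exact hlow i hik ▸ h i hik.le
    · exact (ncard_le_ncard (inter_subset_inter_right I (hG.subset hi))
        (hfin.inter_of_right I)).trans (hk.trans hki)
  · rcases Nat.lt_or_eq_of_le hi with hik | rfl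
    · exact (hlow i hik).symm ▸ h i (by omega)
    · exact htop.symm ▸ hk

theorem exists_isFlag_freedomIndep_iff {A : ℕ → Set α} {m : ℕ}
    (hA : ∀ i < m, A i ⊆ A (i + 1)) (hfin : (A m).Finite) :
    ∃ (r : ℕ) (G : ℕ → Set α), G r = A m ∧ IsFlag G r ∧
      ∀ I, FreedomIndep G r I ↔ FreedomIndep A m I := by
  induction m with
  | zero => exact ⟨0, A, rfl, fun i hi => absurd hi (Nat.not_lt_zero i), fun _ => Iff.rfl⟩
  | succ m ih =>
    have hAm : A m ⊆ A (m + 1) := hA m m.lt_succ_self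
    obtain ⟨R, G, hGtop, hG, hGA⟩ := ih (fun i hi => hA i (by omega)) (hfin.subset hAm)
    obtain ⟨R', G', hG'top, hG', hG'G⟩ :=
      hG.exists_union (hfin.sdiff (t := A m)) (hGtop ▸ disjoint_sdiff_right)
    rw [hGtop, union_sdiff_cancel hAm] at hG'top
    obtain ⟨r, G'', hG''top, hG'', hG''G'⟩ := hG'.exists_truncate (hG'top ▸ hfin) (m + 1)
    refine ⟨r, G'', hG''top.trans hG'top, hG'', fun I => ?_⟩
    rw [hG''G', hG'G, hGA, hG'top, freedomIndep_succ_iff]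

lemma inter_diff_singleton_of_notMem {I B : Set α} {e : α} (he : e ∉ I) :
    I ∩ (B \ {e}) = I ∩ B := by
  rw [← inter_sdiff_assoc, sdiff_singleton_eq_self fun h => he h.1]

lemma freedomIndep_diff_singleton {F : ℕ → Set α} {r : ℕ} {I : Set α} {e : α} (he : e ∉ I) :
    FreedomIndep (fun i => F i \ {e}) r I ↔ FreedomIndep F r I := by
  simp only [FreedomIndep, inter_diff_singleton_of_notMem he]

open Classical in
/-- The chain of constraint sets of `M / e`, for a nonloop `e`. -/
noncomputable def contractFlag (F : ℕ → Set α) (e : α) (i : ℕ) : Set α :=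
  if e ∈ F (i + 1) then F (i + 1) \ {e} else F i

section contractFlag

variable {F : ℕ → Set α} {e : α} {i r : ℕ}

lemma contractFlag_subset (hF : F i ⊆ F (i + 1)) : contractFlag F e i ⊆ F (i + 1) \ {e} := by
  unfold contractFlag
  split_ifs with he
  · rfl
  · exact fun x hx => ⟨hF hx, fun hxe => he (hxe ▸ hF hx)⟩

lemma diff_subset_contractFlag (hF : F i ⊆ F (i + 1)) : F i \ {e} ⊆ contractFlag F e i := by
  unfold contractFlag
  split_ifs
  · exact sdiff_subset_sdiff_left hF
  · exact sdiff_subset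

lemma contractFlag_mono (hF : ∀ i < r + 1, F i ⊆ F (i + 1)) :
    ∀ i < r, contractFlag F e i ⊆ contractFlag F e (i + 1) := fun i hi =>
  (contractFlag_subset (hF i (by omega))).trans (diff_subset_contractFlag (hF (i + 1) (by omega)))

lemma contractFlag_of_mem (he : e ∈ F (i + 1)) : contractFlag F e i = F (i + 1) \ {e} :=
  if_pos he

lemma freedomIndep_insert_iff {I : Set α} (hF : ∀ i < r + 1, F i ⊆ F (i + 1)) (he0 : e ∉ F 0)
    (her : e ∈ F (r + 1)) (heI : e ∉ I) (hI : I.Finite) :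
    FreedomIndep F (r + 1) (insert e I) ↔ FreedomIndep (contractFlag F e) r I := by
  have hcard : ∀ {i}, e ∈ F i → (insert e I ∩ F i).ncard = (I ∩ F i).ncard + 1 := fun h => by
    rw [insert_inter_of_mem h, ncard_insert_of_notMem (fun h' => heI h'.1) (hI.inter_of_left _)]
  constructor
  · intro h i hi
    by_cases hei : e ∈ F (i + 1)
    · have := h (i + 1) (by omega)
      rw [hcard hei] at this
      rw [contractFlag_of_mem hei, inter_diff_singleton_of_notMem heI]
      omega
    · rw [contractFlag, if_neg hei, ← insert_inter_of_notMem fun h => hei (hF i (by omega) h)]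
      exact h i (by omega)
  · intro h i hi
    by_cases hei : e ∈ F i
    · obtain ⟨j, rfl⟩ : ∃ j, i = j + 1 :=
        Nat.exists_eq_succ_of_ne_zero fun hi0 => he0 (hi0 ▸ hei)
      have := h j (by omega)
      rw [contractFlag_of_mem hei, inter_diff_singleton_of_notMem heI] at this
      rw [hcard hei]
      omega
    · have hir : i < r + 1 := lt_of_le_of_ne hi fun hir => hei (hir ▸ her)
      have hFi : F i ⊆ contractFlag F e i :=
        (sdiff_singleton_eq_self hei).symm.subset.trans (diff_subset_contractFlag (hF i hir))
      rw [insert_inter_of_notMem hei]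
      exact (ncard_le_ncard (inter_subset_inter_right I hFi) (hI.inter_of_left _)).trans
        (h i (by omega))

end contractFlag

end FreedomConstraints

namespace Matroid

variable {α : Type*} {M : Matroid α} {e : α} {I : Set α}

lemma exists_isBasis_singleton_union_iff_of_indep (he : M.Indep {e}) :
    (∃ J ⊆ ({e} : Set α), M.IsBasis J {e} ∧ M.Indep (I ∪ J)) ↔ M.Indep (insert e I) := by
  rw [← union_singleton]
  refine ⟨fun ⟨J, hJe, hJ, hIJ⟩ => ?_, fun h => ⟨{e}, subset_rfl, he.isBasis_self, h⟩⟩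
  rwa [hJ.eq_of_subset_indep he hJe subset_rfl] at hIJ

lemma exists_isBasis_singleton_union_iff_of_not_indep (heE : e ∈ M.E) (he : ¬ M.Indep {e}) :
    (∃ J ⊆ ({e} : Set α), M.IsBasis J {e} ∧ M.Indep (I ∪ J)) ↔ M.Indep I := by
  refine ⟨fun ⟨J, _, _, hIJ⟩ => hIJ.subset subset_union_left, fun h => ?_⟩
  obtain ⟨J, hJ⟩ := M.exists_isBasis {e} (singleton_subset_iff.2 heE)
  obtain rfl : J = ∅ :=
    (subset_singleton_iff_eq.1 hJ.subset).resolve_right fun hJe => he (hJe ▸ hJ.indep)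
  exact ⟨∅, empty_subset _, hJ, by rwa [union_empty]⟩

end Matroid

section FreedomMatroid

variable {α : Type*} {S : Set α} {F : ℕ → Set α} {r : ℕ} {M : Matroid α}

lemma exists_isFlag_restrict_diff_singleton (hS : S.Finite) (hFr : F r = S)
    (hF : ∀ i < r, F i ⊆ F (i + 1)) (hInd : ∀ I, M.Indep I ↔ I ⊆ S ∧ FreedomIndep F r I)
    (e : α) :
    ∃ (r' : ℕ) (G : ℕ → Set α), G r' = S \ {e} ∧ IsFlag G r' ∧
      ∀ I, (M ↾ (S \ {e})).Indep I ↔ I ⊆ S \ {e} ∧ FreedomIndep G r' I := by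
  obtain ⟨r', G, hGtop, hG, hGF⟩ := exists_isFlag_freedomIndep_iff (A := (F · \ {e}))
    (fun i hi => sdiff_subset_sdiff_left (hF i hi)) (by rw [hFr]; exact hS.sdiff)
  refine ⟨r', G, hGtop.trans (by rw [hFr]), hG, fun I => ?_⟩
  rw [restrict_indep_iff, hInd, and_comm, hGF]
  refine and_congr_right fun hI => ?_
  rw [freedomIndep_diff_singleton fun h => (hI h).2 rfl, and_iff_right (hI.trans sdiff_subset)]

lemma exists_isFlag_indep_insert (hS : S.Finite) (hFr : F r = S)
    (hF : ∀ i < r, F i ⊆ F (i + 1)) (hInd : ∀ I, M.Indep I ↔ I ⊆ S ∧ FreedomIndep F r I)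
    {e : α} (he : e ∈ S) (hnl : M.Indep {e}) :
    ∃ (r' : ℕ) (G : ℕ → Set α), G r' = S \ {e} ∧ IsFlag G r' ∧
      ∀ I, I ⊆ S \ {e} ∧ M.Indep (insert e I) ↔ I ⊆ S \ {e} ∧ FreedomIndep G r' I := by
  have he0 : e ∉ F 0 := fun h => by simpa [h] using ((hInd _).1 hnl).2 0 (Nat.zero_le _)
  obtain ⟨r, rfl⟩ : ∃ r', r = r' + 1 :=
    Nat.exists_eq_succ_of_ne_zero fun hr => he0 (hr ▸ hFr ▸ he)
  have htop : contractFlag F e r = S \ {e} := by rw [contractFlag_of_mem (hFr ▸ he), hFr]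
  obtain ⟨r', G, hGtop, hG, hGF⟩ :=
    exists_isFlag_freedomIndep_iff (contractFlag_mono hF) (htop ▸ hS.sdiff)
  refine ⟨r', G, hGtop.trans htop, hG, fun I => ?_⟩
  rw [hInd, hGF]
  refine and_congr_right fun hI => ?_
  rw [and_iff_right (insert_subset he (hI.trans sdiff_subset))]
  exact freedomIndep_insert_iff hF he0 (hFr ▸ he) (fun h => (hI h).2 rfl)
    (hS.subset (hI.trans sdiff_subset))

end FreedomMatroid

theorem freedom_matroid_minor_closed_general {α : Type*} (S : Set α) (hS : S.Finite) (r : ℕ)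
    (F : ℕ → Set α) (hFr : F r = S) (hchain : ∀ i < r, F i ⊂ F (i + 1))
    (M : Matroid α) (hE : M.E = S)
    (hInd : ∀ I : Set α, M.Indep I ↔ I ⊆ S ∧ ∀ i ≤ r, (I ∩ F i).ncard ≤ i)
    (e : α) (he : e ∈ S)
    (N : Matroid α)
    (hNInd : ∀ I : Set α, N.Indep I ↔ I ⊆ S \ {e} ∧
      ∃ J ⊆ ({e} : Set α), M.IsBasis J {e} ∧ M.Indep (I ∪ J)) :
    (∃ (r' : ℕ) (G : ℕ → Set α), G r' = S \ {e} ∧ (∀ i < r', G i ⊂ G (i + 1)) ∧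
      ∀ I : Set α, (M ↾ (S \ {e})).Indep I ↔
        I ⊆ S \ {e} ∧ ∀ i ≤ r', (I ∩ G i).ncard ≤ i) ∧
    (∃ (r' : ℕ) (G : ℕ → Set α), G r' = S \ {e} ∧ (∀ i < r', G i ⊂ G (i + 1)) ∧
      ∀ I : Set α, N.Indep I ↔
        I ⊆ S \ {e} ∧ ∀ i ≤ r', (I ∩ G i).ncard ≤ i) := by
  have hF : ∀ i < r, F i ⊆ F (i + 1) := fun i hi => (hchain i hi).subset
  obtain ⟨r₁, G₁, hG₁top, hG₁, hdel⟩ := exists_isFlag_restrict_diff_singleton hS hFr hF hInd e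
  refine ⟨⟨r₁, G₁, hG₁top, hG₁, hdel⟩, ?_⟩
  by_cases hnl : M.Indep {e}
  · obtain ⟨r₂, G₂, hG₂top, hG₂, hcon⟩ := exists_isFlag_indep_insert hS hFr hF hInd he hnl
    refine ⟨r₂, G₂, hG₂top, hG₂, fun I => ?_⟩
    rw [hNInd, exists_isBasis_singleton_union_iff_of_indep hnl]
    exact hcon I
  · refine ⟨r₁, G₁, hG₁top, hG₁, fun I => ?_⟩
    rw [hNInd, exists_isBasis_singleton_union_iff_of_not_indep (hE ▸ he) hnl, and_comm,
      ← restrict_indep_iff]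
    exact hdel I

/-- The class of freedom matroids is minor-closed: for any freedom matroid
`M = M(S₀,…,S_r)` on `S` and any `e ∈ S`, both the deletion `M \ e` (i.e. the restriction
`M ↾ (S \ {e})`) and the contraction `M/e` are freedom matroids — each is the freedom
matroid of a flag on `S \ {e}`.  The contraction `M/e` is characterized as the matroid `N`
with ground set `S \ {e}` in which `I` is independent iff `I ⊆ S \ {e}` and `I ∪ J` is
`M`-independent for some basis `J` of `{e}` in `M`. -/
theorem freedom_matroid_minor_closed {α : Type*} (S : Set α) (hS : S.Finite) (r : ℕ)
    (F : ℕ → Set α) (hFr : F r = S) (hchain : ∀ i < r, F i ⊂ F (i + 1))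
    (M : Matroid α) (hE : M.E = S)
    (hInd : ∀ I : Set α, M.Indep I ↔ I ⊆ S ∧ ∀ i ≤ r, (I ∩ F i).ncard ≤ i)
    (e : α) (he : e ∈ S)
    (N : Matroid α) (hNE : N.E = S \ {e})
    (hNInd : ∀ I : Set α, N.Indep I ↔ I ⊆ S \ {e} ∧
      ∃ J ⊆ ({e} : Set α), M.IsBasis J {e} ∧ M.Indep (I ∪ J)) :
    (∃ (r' : ℕ) (G : ℕ → Set α), G r' = S \ {e} ∧ (∀ i < r', G i ⊂ G (i + 1)) ∧
      ∀ I : Set α, (M ↾ (S \ {e})).Indep I ↔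
        I ⊆ S \ {e} ∧ ∀ i ≤ r', (I ∩ G i).ncard ≤ i) ∧
    (∃ (r' : ℕ) (G : ℕ → Set α), G r' = S \ {e} ∧ (∀ i < r', G i ⊂ G (i + 1)) ∧
      ∀ I : Set α, N.Indep I ↔
        I ⊆ S \ {e} ∧ ∀ i ≤ r', (I ∩ G i).ncard ≤ i) :=
  freedom_matroid_minor_closed_general S hS r F hFr hchain M hE hInd e he N hNInd
end

section
/- Let M = M(S_0,...,S_r) be a freedom matroid and let A be an independent set of M. Then the closure of A in M equals A ∪ S_m, where m = max{ i : |A ∩ S_i| = i }. -/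
open Matroid Set

/-- Let `M = M(S₀,…,S_r)` be a freedom matroid and let `A` be an independent
set of `M`.  Then the closure of `A` in `M` equals `A ∪ S_m`, where
`m = max { i : |A ∩ Sᵢ| = i }`. -/
theorem freedom_matroid_closure_indep {α : Type*} (S : Set α) (hS : S.Finite) (r : ℕ)
    (F : ℕ → Set α) (hFr : F r = S) (hchain : ∀ i < r, F i ⊂ F (i + 1))
    (M : Matroid α) (hE : M.E = S)
    (hInd : ∀ I : Set α, M.Indep I ↔ I ⊆ S ∧ ∀ i ≤ r, (I ∩ F i).ncard ≤ i)
    (A : Set α) (hA : M.Indep A)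
    (m : ℕ) (hmr : m ≤ r) (hm : (A ∩ F m).ncard = m)
    (hmax : ∀ i ≤ r, (A ∩ F i).ncard = i → i ≤ m) :
    M.closure A = A ∪ F m := by
  have hAS : A ⊆ S := ((hInd A).1 hA).1
  have hAcard := ((hInd A).1 hA).2
  have hAfin : A.Finite := hS.subset hAS
  -- monotonicity of F
  have hmono : ∀ i j, i ≤ j → j ≤ r → F i ⊆ F j := by
    intro i j hij hjr
    induction j with
    | zero => simp [Nat.le_zero.1 hij]
    | succ k ih =>
      rcases Nat.lt_succ_iff_lt_or_eq.1 (Nat.lt_succ_of_le hij) with h | h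
      · exact (ih (Nat.lt_succ_iff.1 h) (le_of_lt hjr)).trans
          (hchain k (lt_of_lt_of_le (Nat.lt_succ_self k) hjr)).subset
      · exact h ▸ subset_rfl
  have hFmS : F m ⊆ S := hFr ▸ hmono m r hmr le_rfl
  ext x
  rw [hA.mem_closure_iff]
  constructor
  · rintro (hdep | hxA)
    · rcases hdep with ⟨hnind, hsub⟩
      have hxS : x ∈ S := hE ▸ hsub (mem_insert x A)
      by_cases hxA : x ∈ A
      · exact Or.inl hxA
      rw [hInd, not_and_or] at hnind
      rcases hnind with h | h
      · exact absurd (insert_subset hxS hAS) h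
      push_neg at h
      obtain ⟨i, hir, hi⟩ := h
      -- (insert x A ∩ F i).ncard > i forces (A ∩ F i).ncard = i and x ∈ F i
      have hsub1 : insert x A ∩ F i ⊆ insert x (A ∩ F i) := by
        intro y hy; rcases hy.1 with h1 | h1
        · exact Or.inl h1
        · exact Or.inr ⟨h1, hy.2⟩
      have hle : (insert x A ∩ F i).ncard ≤ (A ∩ F i).ncard + 1 :=
        le_trans (ncard_le_ncard hsub1 ((hAfin.inter_of_left _).insert x))
          (ncard_insert_le _ _)
      have hAi : (A ∩ F i).ncard = i := le_antisymm (hAcard i hir) (by omega)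
      have him := hmax i hir hAi
      have hxFi : x ∈ F i := by
        by_contra hxFi
        have : insert x A ∩ F i = A ∩ F i := by
          ext y; constructor
          · rintro ⟨h1 | h1, h2⟩
            · exact absurd (h1 ▸ h2) hxFi
            · exact ⟨h1, h2⟩
          · exact fun hy => ⟨Or.inr hy.1, hy.2⟩
        rw [this, hAi] at hi; omega
      exact Or.inr (hmono i m him hmr hxFi)
    · exact Or.inl hxA
  · rintro (hxA | hxF)
    · exact Or.inr hxA
    by_cases hxA : x ∈ A
    · exact Or.inr hxA
    left
    constructor
    · rw [hInd, not_and_or]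
      right
      push_neg
      refine ⟨m, hmr, ?_⟩
      have : insert x A ∩ F m = insert x (A ∩ F m) := by
        ext y; constructor
        · rintro ⟨h1 | h1, h2⟩
          · exact Or.inl h1
          · exact Or.inr ⟨h1, h2⟩
        · rintro (rfl | hy)
          · exact ⟨Or.inl rfl, hxF⟩
          · exact ⟨Or.inr hy.1, hy.2⟩
      rw [this, ncard_insert_of_notMem (fun h => hxA h.1) (hAfin.inter_of_left _), hm]
      omega
    · rw [hE]
      exact insert_subset (hFmS hxF) hAS
end

section
/- If F is any flat of rank k in the freedom matroid M(S_0,...,S_r), then |F| ≤ |S_k|. -/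
open Matroid Set

/-- The rank of a set `X` in a matroid `M`: the largest cardinality of an independent
subset of `X`. -/
noncomputable def matRk {α : Type*} (M : Matroid α) (X : Set α) : ℕ :=
  sSup {k : ℕ | ∃ I : Set α, I ⊆ X ∧ M.Indep I ∧ I.ncard = k}

/-!
Take a basis `I` of the flat, with `|I| = k`, and let `t` be the largest index at which `I` is
tight, `|I ∩ S_t| = t` (`t = 0` is always tight, since `S_0` consists of loops). An element `y` of
the flat outside `I` makes `I + y` dependent, so `y` lies in some `S_i` at which `I` is tight, and
hence in `S_t`. The flat is therefore covered by `S_t` and the `k - t` elements of `I \ S_t`, while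
strictness of the chain gives `|S_t| + (k - t) ≤ |S_k|`.
-/

theorem Matroid.matRk_eq_ncard_of_isBasis' {α : Type*} {M : Matroid α} {I X : Set α}
    (hIX : M.IsBasis' I X) (hI : I.Finite) : matRk M X = I.ncard := by
  refine IsGreatest.csSup_eq ⟨⟨I, hIX.subset, hIX.indep, rfl⟩, ?_⟩
  rintro _ ⟨J, hJX, hJ, rfl⟩
  exact ENat.toNat_le_toNat ((hJ.encard_le_eRk_of_subset hJX).trans hIX.encard_eq_eRk.ge)
    hI.encard_lt_top.ne

section FreedomMatroid

variable {α : Type*} {F : ℕ → Set α} {r : ℕ}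

lemma subset_of_forall_ssubset_succ (hchain : ∀ i < r, F i ⊂ F (i + 1)) {a b : ℕ}
    (hab : a ≤ b) (hb : b ≤ r) : F a ⊆ F b := by
  induction b, hab using Nat.le_induction with
  | base => exact subset_rfl
  | succ n _ ih => exact (ih (by omega)).trans (hchain n (by omega)).subset

lemma ncard_add_le_ncard_of_forall_ssubset_succ (hchain : ∀ i < r, F i ⊂ F (i + 1))
    (hfin : (F r).Finite) {a b : ℕ} (hab : a ≤ b) (hb : b ≤ r) :
    (F a).ncard + (b - a) ≤ (F b).ncard := by
  induction b, hab using Nat.le_induction with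
  | base => simp
  | succ n hn ih =>
    have hlt : (F n).ncard < (F (n + 1)).ncard :=
      ncard_lt_ncard (hchain n (by omega)) (hfin.subset (subset_of_forall_ssubset_succ hchain
        hb le_rfl))
    have := ih (by omega)
    omega

variable {M : Matroid α}

lemma exists_tight_of_not_indep_insert
    (hInd : ∀ I, M.Indep I ↔ I ⊆ F r ∧ ∀ i ≤ r, (I ∩ F i).ncard ≤ i) {I : Set α} {y : α}
    (hI : M.Indep I) (hy : y ∈ F r) (hyI : ¬ M.Indep (insert y I)) :
    ∃ i ≤ r, y ∈ F i ∧ (I ∩ F i).ncard = i := by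
  obtain ⟨hIr, hIle⟩ := (hInd I).1 hI
  simp only [hInd, insert_subset hy hIr, true_and, not_forall, not_le] at hyI
  obtain ⟨i, hir, hlt⟩ := hyI
  have hyi : y ∈ F i := by
    by_contra hyi
    rw [insert_inter_of_notMem hyi] at hlt
    exact (hIle i hir).not_gt hlt
  rw [insert_inter_of_mem hyi] at hlt
  have hle := ncard_insert_le y (I ∩ F i)
  have hIi := hIle i hir
  exact ⟨i, hir, hyi, by omega⟩

lemma exists_tight_subset_union_of_isBasis'
    (hInd : ∀ I, M.Indep I ↔ I ⊆ F r ∧ ∀ i ≤ r, (I ∩ F i).ncard ≤ i)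
    (hchain : ∀ i < r, F i ⊂ F (i + 1)) {I X : Set α}
    (hIX : M.IsBasis' I X) (hX : X ⊆ F r) :
    ∃ t ≤ r, (I ∩ F t).ncard = t ∧ X ⊆ I ∪ F t := by
  classical
  let P i := (I ∩ F i).ncard = i
  have hP0 : P 0 := Nat.le_zero.1 (((hInd I).1 hIX.indep).2 0 (Nat.zero_le r))
  refine ⟨Nat.findGreatest P r, Nat.findGreatest_le r, Nat.findGreatest_spec (Nat.zero_le r) hP0,
    fun y hyX ↦ ?_⟩
  by_cases hyI : y ∈ I
  · exact Or.inl hyI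
  obtain ⟨i, hir, hyi, hPi⟩ := exists_tight_of_not_indep_insert hInd hIX.indep (hX hyX)
    (hIX.insert_not_indep ⟨hyX, hyI⟩)
  exact Or.inr (subset_of_forall_ssubset_succ hchain (Nat.le_findGreatest (P := P) hir hPi)
    (Nat.findGreatest_le r) hyi)

end FreedomMatroid

theorem freedom_matroid_flat_card_le_general {α : Type*} (S : Set α) (hS : S.Finite) (r : ℕ)
    (F : ℕ → Set α) (hFr : F r = S) (hchain : ∀ i < r, F i ⊂ F (i + 1))
    (M : Matroid α) (hE : M.E = S)
    (hInd : ∀ I : Set α, M.Indep I ↔ I ⊆ S ∧ ∀ i ≤ r, (I ∩ F i).ncard ≤ i)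
    (Fl : Set α) (hFl : M.IsFlat Fl) (k : ℕ) (hrk : matRk M Fl = k) :
    Fl.ncard ≤ (F k).ncard := by
  subst hFr hrk
  obtain ⟨I, hI⟩ := M.exists_isBasis' Fl
  have hFlS : Fl ⊆ F r := hE ▸ hFl.subset_ground
  have hIfin : I.Finite := hS.subset (hI.subset.trans hFlS)
  obtain ⟨t, htr, htight, hcover⟩ := exists_tight_subset_union_of_isBasis' hInd hchain hI hFlS
  have hIr : I.ncard ≤ r := by
    simpa [inter_eq_left.2 (hI.subset.trans hFlS)] using ((hInd I).1 hI.indep).2 r le_rfl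
  have hFt : (F t).Finite := hS.subset (subset_of_forall_ssubset_succ hchain htr le_rfl)
  have hIt : (I ∩ F t).ncard + (I \ F t).ncard = I.ncard :=
    ncard_inter_add_ncard_sdiff_eq_ncard I (F t) hIfin
  rw [matRk_eq_ncard_of_isBasis' hI hIfin]
  calc Fl.ncard ≤ (I ∪ F t).ncard := ncard_le_ncard hcover (hIfin.union hFt)
    _ = (I \ F t).ncard + (F t).ncard := (ncard_sdiff_add_ncard I (F t) hIfin hFt).symm
    _ ≤ (F t).ncard + (I.ncard - t) := by omega
    _ ≤ (F I.ncard).ncard :=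
          ncard_add_le_ncard_of_forall_ssubset_succ hchain hS (by omega) hIr

/-- If `F` is any flat of rank `k` in the freedom matroid `M(S₀,…,S_r)`,
then `|F| ≤ |S_k|`. -/
theorem freedom_matroid_flat_card_le {α : Type*} (S : Set α) (hS : S.Finite) (r : ℕ)
    (F : ℕ → Set α) (hFr : F r = S) (hchain : ∀ i < r, F i ⊂ F (i + 1))
    (M : Matroid α) (hE : M.E = S)
    (hInd : ∀ I : Set α, M.Indep I ↔ I ⊆ S ∧ ∀ i ≤ r, (I ∩ F i).ncard ≤ i)
    (Fl : Set α) (hFl : M.IsFlat Fl) (k : ℕ) (hk : k ≤ r) (hrk : matRk M Fl = k) :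
    Fl.ncard ≤ (F k).ncard :=
  freedom_matroid_flat_card_le_general S hS r F hFr hchain M hE hInd Fl hFl k hrk
end

section
/- For any finite linearly ordered set S, the map sending each subset A ⊆ S to its complement S \ A is order-reversing for the Gale order: if A ≤ B in the Gale order on the power set of S, then the complements satisfy S \ B ≤ S \ A. Consequently, complementation is a lattice antiautomorphism of the power set of S with the Gale order. -/
open Finset

def galeLE {α : Type*} [LinearOrder α] (A B : Finset α) : Prop :=
  B.card ≤ A.card ∧ ∀ (i : ℕ) (hA : i < A.card) (hB : i < B.card),
    A.orderEmbOfFin rfl ⟨i, hA⟩ ≤ B.orderEmbOfFin rfl ⟨i, hB⟩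



private lemma gale_count {α : Type*} [LinearOrder α] (A : Finset α) (x : α)
    (i : ℕ) (h : i < A.card) :
    A.orderEmbOfFin rfl ⟨i, h⟩ ≤ x ↔ i < (A.filter (· ≤ x)).card := by
  set e := A.orderEmbOfFin rfl with he
  have himg : (univ.filter (fun j : Fin A.card => e j ≤ x)).image e
      = A.filter (· ≤ x) := by
    ext y
    simp only [mem_image, mem_filter, mem_univ, true_and]
    constructor
    · rintro ⟨j, hj, rfl⟩; exact ⟨Finset.orderEmbOfFin_mem _ _ _, hj⟩
    · rintro ⟨hy, hyx⟩
      have : y ∈ Set.range e := by rw [he, Finset.range_orderEmbOfFin]; exact hy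
      obtain ⟨j, rfl⟩ := this
      exact ⟨j, hyx, rfl⟩
  have hcard : (univ.filter (fun j : Fin A.card => e j ≤ x)).card
      = (A.filter (· ≤ x)).card := by
    rw [← himg, card_image_of_injective _ e.injective]
  rw [← hcard]
  constructor
  · intro hle
    have hsub : (Iic (⟨i, h⟩ : Fin A.card)) ⊆ univ.filter (fun j => e j ≤ x) := by
      intro j hj
      simp only [mem_Iic] at hj
      simp only [mem_filter, mem_univ, true_and]
      exact le_trans (e.monotone hj) hle
    have := card_le_card hsub
    rw [Fin.card_Iic] at this
    simp only [Fin.val_mk] at this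
    omega
  · intro hlt
    by_contra hle
    push_neg at hle
    have hsub : (univ.filter (fun j : Fin A.card => e j ≤ x)) ⊆ Iio ⟨i, h⟩ := by
      intro j hj
      simp only [mem_filter, mem_univ, true_and] at hj
      simp only [mem_Iio]
      by_contra hji
      push_neg at hji
      exact absurd (le_trans (e.monotone hji) hj) (not_le.2 hle)
    have := card_le_card hsub
    rw [Fin.card_Iio] at this
    simp only [Fin.val_mk] at this
    omega

private lemma gale_iff_count {α : Type*} [LinearOrder α] (A B : Finset α) :
    galeLE A B ↔ B.card ≤ A.card ∧
      ∀ x, (B.filter (· ≤ x)).card ≤ (A.filter (· ≤ x)).card := by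
  constructor
  · rintro ⟨hc, hab⟩
    refine ⟨hc, fun x => ?_⟩
    rcases Nat.eq_zero_or_pos (B.filter (· ≤ x)).card with h0 | h0
    · omega
    · set i := (B.filter (· ≤ x)).card - 1 with hi
      have hiB : i < B.card := lt_of_lt_of_le (by omega : i < (B.filter (· ≤ x)).card)
        (card_le_card (filter_subset _ _))
      have hiA : i < A.card := lt_of_lt_of_le hiB hc
      have hBx : B.orderEmbOfFin rfl ⟨i, hiB⟩ ≤ x :=
        (gale_count B x i hiB).2 (by omega)
      have hAx : A.orderEmbOfFin rfl ⟨i, hiA⟩ ≤ x := le_trans (hab i hiA hiB) hBx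
      have := (gale_count A x i hiA).1 hAx
      omega
  · rintro ⟨hc, hcount⟩
    refine ⟨hc, fun i hA hB => ?_⟩
    set x := B.orderEmbOfFin rfl ⟨i, hB⟩
    have : i < (B.filter (· ≤ x)).card := (gale_count B x i hB).1 le_rfl
    exact (gale_count A x i hA).2 (lt_of_lt_of_le this (hcount x))

private lemma gale_compl_mono {α : Type*} [Fintype α] [LinearOrder α]
    {A B : Finset α} (h : galeLE A B) : galeLE Bᶜ Aᶜ := by
  rw [gale_iff_count] at h ⊢
  obtain ⟨hc, hcount⟩ := h
  constructor
  · simp only [card_compl]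
    omega
  · intro x
    have key : ∀ C : Finset α, (Cᶜ.filter (· ≤ x)).card
        = (univ.filter (· ≤ x)).card - (C.filter (· ≤ x)).card := by
      intro C
      have : Cᶜ.filter (· ≤ x) = univ.filter (· ≤ x) \ C.filter (· ≤ x) := by
        ext y
        simp only [mem_filter, mem_sdiff, mem_compl, mem_univ, true_and]
        tauto
      rw [this, card_sdiff_of_subset (filter_subset_filter _ (subset_univ C))]
    rw [key A, key B]
    have hB := card_le_card (filter_subset_filter (· ≤ x) (subset_univ B))
    have hA := card_le_card (filter_subset_filter (· ≤ x) (subset_univ A))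
    have hx := hcount x
    omega

/-- For a finite linearly ordered set `S`, complementation is
order-reversing for the Gale order: if `A ≤ B` then `S \ B ≤ S \ A`; consequently,
complementation is a lattice antiautomorphism of the Gale-ordered power set. -/
theorem gale_compl_antiauto {α : Type*} [Fintype α] [LinearOrder α] :
    (∀ A B : Finset α, galeLE A B → galeLE Bᶜ Aᶜ) ∧
    (∀ A B : Finset α, galeLE A B ↔ galeLE Bᶜ Aᶜ) := by
  refine ⟨fun A B h => gale_compl_mono h, fun A B => ⟨fun h => gale_compl_mono h, fun h => ?_⟩⟩
  simpa using gale_compl_mono h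
end

section
/- Let S be a finite linearly ordered set and T ⊆ S with |T| = r. Then a set A ⊆ S is independent in the freedom matroid M_T(S) if and only if A ≥ T in the Gale order on the power set of S; consequently, the bases of M_T(S) are exactly the r-element subsets B of S with B ≥ T in the Gale order. -/
open Matroid Set

/-- The flag `(T₀, …, T_r)` on a linearly ordered set determined by an `r`-element
subset `T = {t₁ < ⋯ < t_r}`: `T_r` is everything and `Tᵢ = { s : s < t_{i+1} }` for
`0 ≤ i ≤ r-1`. -/
def flagOf {α : Type*} [LinearOrder α] (T : Finset α) {r : ℕ} (hT : T.card = r)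
    (i : ℕ) : Set α :=
  if h : i < r then {s : α | s < T.orderEmbOfFin hT ⟨i, h⟩} else Set.univ

/-!
Write `A = {a₀ < a₁ < ⋯}`. Exactly `j` elements of `A` lie below `a_j`, so `A` has at most
`i` elements below `t` iff `t ≤ a_i` (or `A` has at most `i` elements). With `t = t_{i+1}`
this turns the rank condition on `Tᵢ` into the `i`-th Gale inequality, and the condition on
`T_r = univ` into `|A| ≤ r`. For the bases: `T` itself is independent of size `r` and no
independent set is larger, so the bases are the independent sets of size `r`.
-/

namespace Finset

variable {α : Type*} [LinearOrder α]

theorem card_filter_lt_orderEmbOfFin (A : Finset α) (j : Fin A.card) :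
    #{a ∈ A | a < A.orderEmbOfFin rfl j} = j := by
  have hfilter : {a ∈ A | a < A.orderEmbOfFin rfl j} =
      (Iio j).map (A.orderEmbOfFin rfl).toEmbedding := by
    ext a
    simp only [mem_filter, mem_map, mem_Iio, RelEmbedding.coe_toEmbedding]
    constructor
    · rintro ⟨ha, hlt⟩
      obtain ⟨k, rfl⟩ : a ∈ Set.range (A.orderEmbOfFin rfl) := by
        rwa [range_orderEmbOfFin]
      exact ⟨k, (OrderEmbedding.lt_iff_lt _).1 hlt, rfl⟩
    · rintro ⟨k, hk, rfl⟩
      exact ⟨orderEmbOfFin_mem A rfl k, (OrderEmbedding.lt_iff_lt _).2 hk⟩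
  rw [hfilter, card_map, Fin.card_Iio]

theorem card_filter_lt_le_iff (A : Finset α) (t : α) (i : ℕ) :
    #{a ∈ A | a < t} ≤ i ↔ ∀ h : i < A.card, t ≤ A.orderEmbOfFin rfl ⟨i, h⟩ := by
  constructor
  · intro hle hi
    by_contra! hlt
    have hssub : {a ∈ A | a < A.orderEmbOfFin rfl ⟨i, hi⟩} ⊂ {a ∈ A | a < t} :=
      (ssubset_iff_of_subset (monotone_filter_right A fun _ _ ha => ha.trans hlt)).2
        ⟨_, mem_filter.2 ⟨orderEmbOfFin_mem A rfl _, hlt⟩, by simp⟩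
    have := card_lt_card hssub
    rw [card_filter_lt_orderEmbOfFin] at this
    exact this.not_ge hle
  · intro hge
    by_cases hi : i < A.card
    · calc #{a ∈ A | a < t}
          ≤ #{a ∈ A | a < A.orderEmbOfFin rfl ⟨i, hi⟩} :=
            card_le_card (monotone_filter_right A fun _ _ ha => ha.trans_le (hge hi))
        _ = i := card_filter_lt_orderEmbOfFin A ⟨i, hi⟩
    · exact (card_filter_le A _).trans (not_lt.1 hi)

end Finset

section Freedom

open scoped Finset

variable {α : Type*} [LinearOrder α]

theorem flagOf_of_lt (T : Finset α) {r i : ℕ} (hT : T.card = r) (hi : i < r) :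
    flagOf T hT i = Iio (T.orderEmbOfFin hT ⟨i, hi⟩) :=
  dif_pos hi

theorem flagOf_of_le (T : Finset α) {r i : ℕ} (hT : T.card = r) (hi : r ≤ i) :
    flagOf T hT i = univ :=
  dif_neg hi.not_gt

theorem ncard_coe_inter_Iio (A : Finset α) (t : α) :
    ((A : Set α) ∩ Iio t).ncard = #{a ∈ A | a < t} := by
  rw [← ncard_coe_finset, Finset.coe_filter]
  rfl

theorem galeLE_refl (A : Finset α) : galeLE A A :=
  ⟨le_rfl, fun _ _ _ => le_rfl⟩

theorem forall_ncard_inter_flagOf_le_iff_galeLE (T A : Finset α) :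
    (∀ i ≤ T.card, ((A : Set α) ∩ flagOf T rfl i).ncard ≤ i) ↔ galeLE T A := by
  have hlast : ((A : Set α) ∩ flagOf T rfl T.card).ncard = A.card := by
    rw [flagOf_of_le T rfl le_rfl, inter_univ, ncard_coe_finset]
  have hlt (i : ℕ) (hi : i < T.card) : ((A : Set α) ∩ flagOf T rfl i).ncard ≤ i ↔
      ∀ hiA : i < A.card,
        T.orderEmbOfFin rfl ⟨i, hi⟩ ≤ A.orderEmbOfFin rfl ⟨i, hiA⟩ := by
    rw [flagOf_of_lt T rfl hi, ncard_coe_inter_Iio, Finset.card_filter_lt_le_iff]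
  constructor
  · intro h
    exact ⟨hlast ▸ h T.card le_rfl, fun i hiT => (hlt i hiT).1 (h i hiT.le)⟩
  · rintro ⟨hcard, hgale⟩ i hi
    rcases hi.lt_or_eq with hi | rfl
    · exact (hlt i hi).2 (hgale i hi)
    · exact hlast ▸ hcard

end Freedom

theorem Matroid.Indep.isBase_of_ncard_eq {α : Type*} {M : Matroid α} {B : Set α} {r : ℕ}
    (hB : M.Indep B) (hfin : B.Finite) (hcard : B.ncard = r)
    (hle : ∀ I, M.Indep I → I.ncard ≤ r) : M.IsBase B :=
  hB.isBase_of_forall_insert fun e he hins => by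
    have := hle _ hins
    rw [ncard_insert_of_notMem he.2 hfin] at this
    omega

theorem freedom_matroid_indep_iff_gale_general {α : Type*} [LinearOrder α]
    (T : Finset α) (r : ℕ) (hT : T.card = r)
    (M : Matroid α)
    (hInd : ∀ I : Set α, M.Indep I ↔ ∀ i ≤ r, (I ∩ flagOf T hT i).ncard ≤ i) :
    (∀ A : Finset α, M.Indep ↑A ↔ galeLE T A) ∧
    (∀ B : Finset α, M.IsBase ↑B ↔ (B.card = r ∧ galeLE T B)) := by
  subst hT
  have hindep (A : Finset α) : M.Indep ↑A ↔ galeLE T A :=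
    (hInd A).trans (forall_ncard_inter_flagOf_le_iff_galeLE T A)
  have hle (I : Set α) (hI : M.Indep I) : I.ncard ≤ T.card := by
    simpa [flagOf_of_le T rfl le_rfl] using (hInd I).1 hI T.card le_rfl
  have hTbase : M.IsBase ↑T :=
    ((hindep T).2 (galeLE_refl T)).isBase_of_ncard_eq T.finite_toSet
      (ncard_coe_finset T) hle
  refine ⟨hindep, fun B => ⟨fun hB => ⟨?_, (hindep B).1 hB.indep⟩,
    fun ⟨hcard, hgale⟩ => ?_⟩⟩
  · simpa using hB.ncard_eq_ncard_of_isBase hTbase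
  · exact ((hindep B).2 hgale).isBase_of_ncard_eq B.finite_toSet (by simpa using hcard) hle

/-- Let `S` be a finite linearly ordered set and `T ⊆ S` with `|T| = r`.
A set `A ⊆ S` is independent in the freedom matroid `M_T(S)` iff `A ≥ T` in the Gale
order; consequently the bases of `M_T(S)` are exactly the `r`-element subsets `B`
with `B ≥ T` in the Gale order. -/
theorem freedom_matroid_indep_iff_gale {α : Type*} [Fintype α] [LinearOrder α]
    (T : Finset α) (r : ℕ) (hT : T.card = r)
    (M : Matroid α) (hE : M.E = Set.univ)
    (hInd : ∀ I : Set α, M.Indep I ↔ ∀ i ≤ r, (I ∩ flagOf T hT i).ncard ≤ i) :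
    (∀ A : Finset α, M.Indep ↑A ↔ galeLE T A) ∧
    (∀ B : Finset α, M.IsBase ↑B ↔ (B.card = r ∧ galeLE T B)) :=
  freedom_matroid_indep_iff_gale_general T r hT M hInd
end

section
/- For any finite linearly ordered set S and T ⊆ S, the dual matroid M_T(S)* equals M_{T'}(S_φ), where T' = S \ T is the complement of T and S_φ is the set S equipped with the reversed linear order. In particular, the class of freedom matroids is closed under duality. -/
open Matroid Set

/-- The flag on the *reversal* `S_φ` of a linearly ordered set determined by an
`m`-element subset `C`: with `C = {c₁ > ⋯ > c_m}` listed in decreasing order (i.e.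
increasing order of `S_φ`), the `i`-th member of the flag for `i < m` is
`{ s : s < c_{i+1} in S_φ } = { s : s > c_{i+1} }`, where `c_{i+1}` is the
`(m-1-i)`-th smallest element of `C`; the `m`-th member is everything. -/
def flagOfRev {α : Type*} [LinearOrder α] (C : Finset α) {m : ℕ} (hC : C.card = m)
    (i : ℕ) : Set α :=
  if h : i < m then {s : α | C.orderEmbOfFin hC ⟨m - 1 - i, by omega⟩ < s} else Set.univ


/-!
Independence in `M_T(S)` means `|I ∩ D| ≤ |T ∩ D|` for every lower set `D` of `S`, and, since
the initial segments of `S_φ` are the upper sets of `S`, independence in `M_{T'}(S_φ)` means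
`|I ∩ U| ≤ |T' ∩ U|` for every upper set `U`. For `|B| = |T|`, counting in the upper set
`U = Dᶜ` gives `|Bᶜ ∩ U| - |T' ∩ U| = |B ∩ D| - |T ∩ D|`, so `B` satisfies the first system
exactly when `Bᶜ` satisfies the second. As the bases are the independent sets of size `|T|`
resp. `|T'|`, complementation maps the bases of `M_T(S)` onto those of `M_{T'}(S_φ)`.
-/

section Flag

variable {α : Type*} [LinearOrder α] {r : ℕ} (T : Finset α) (hT : T.card = r)

lemma coe_inter_Iio_orderEmbOfFin (i : Fin r) :
    ↑T ∩ Iio (T.orderEmbOfFin hT i) = T.orderEmbOfFin hT '' Iio i := by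
  ext x
  constructor
  · rintro ⟨hxT, hxi⟩
    obtain ⟨j, rfl⟩ : x ∈ range (T.orderEmbOfFin hT) := by
      rwa [Finset.range_orderEmbOfFin]
    exact ⟨j, (T.orderEmbOfFin hT).lt_iff_lt.1 hxi, rfl⟩
  · rintro ⟨j, hj, rfl⟩
    exact ⟨T.orderEmbOfFin_mem hT j, (T.orderEmbOfFin hT).lt_iff_lt.2 hj⟩

lemma ncard_coe_inter_Iio_orderEmbOfFin (i : Fin r) :
    (↑T ∩ Iio (T.orderEmbOfFin hT i)).ncard = i := by
  rw [coe_inter_Iio_orderEmbOfFin, ncard_image_of_injective _ (T.orderEmbOfFin hT).injective,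
    ← Finset.coe_Iio, ncard_coe_finset, Fin.card_Iio]

lemma isLowerSet_flagOf (i : ℕ) : IsLowerSet (flagOf T hT i) := by
  unfold flagOf
  split_ifs
  exacts [isLowerSet_Iio _, isLowerSet_univ]

lemma ncard_coe_inter_flagOf {i : ℕ} (hi : i ≤ r) : (↑T ∩ flagOf T hT i).ncard = i := by
  unfold flagOf
  split_ifs with h
  · exact ncard_coe_inter_Iio_orderEmbOfFin T hT ⟨i, h⟩
  · rw [inter_univ, ncard_coe_finset]
    omega

lemma lt_ncard_coe_inter_of_orderEmbOfFin_mem {D : Set α} (hD : IsLowerSet D) {i : Fin r}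
    (hi : T.orderEmbOfFin hT i ∈ D) : (i : ℕ) < (↑T ∩ D).ncard := by
  have hsub : ↑T ∩ Iio (T.orderEmbOfFin hT i) ⊂ ↑T ∩ D :=
    ssubset_of_subset_not_subset
      (inter_subset_inter_right _ fun x hx => hD (le_of_lt hx) hi)
      fun h => (h ⟨T.orderEmbOfFin_mem hT i, hi⟩).2.false
  simpa [ncard_coe_inter_Iio_orderEmbOfFin] using
    ncard_lt_ncard hsub (T.finite_toSet.inter_of_left D)

lemma subset_flagOf_ncard_coe_inter {D : Set α} (hD : IsLowerSet D) :
    D ⊆ flagOf T hT (↑T ∩ D).ncard := by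
  intro x hx
  unfold flagOf
  split_ifs with h
  · by_contra! hle
    exact (lt_ncard_coe_inter_of_orderEmbOfFin_mem T hT hD (i := ⟨_, h⟩)
      (hD (not_lt.1 hle) hx)).false
  · trivial

theorem forall_ncard_inter_flagOf_le_iff [Finite α] (I : Set α) :
    (∀ i ≤ r, (I ∩ flagOf T hT i).ncard ≤ i) ↔
      ∀ D, IsLowerSet D → (I ∩ D).ncard ≤ (↑T ∩ D).ncard := by
  constructor
  · intro h D hD
    have hk : (↑T ∩ D).ncard ≤ r :=
      hT ▸ ncard_coe_finset T ▸ ncard_le_ncard inter_subset_left T.finite_toSet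
    calc (I ∩ D).ncard ≤ (I ∩ flagOf T hT (↑T ∩ D).ncard).ncard :=
          ncard_le_ncard (inter_subset_inter_right _ (subset_flagOf_ncard_coe_inter T hT hD))
      _ ≤ (↑T ∩ D).ncard := h _ hk
  · intro h i hi
    simpa only [ncard_coe_inter_flagOf T hT hi] using h _ (isLowerSet_flagOf T hT i)

end Flag

section FlagRev

open OrderDual

variable {α : Type*} [LinearOrder α] {m : ℕ} (C : Finset α) (hC : C.card = m)

lemma orderEmbOfFin_map_toDual (hC' : (C.map toDual.toEmbedding).card = m) (i : Fin m) :
    (C.map toDual.toEmbedding).orderEmbOfFin hC' i = toDual (C.orderEmbOfFin hC i.rev) := by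
  refine congrFun (Finset.orderEmbOfFin_unique hC'
    (f := fun i => toDual (C.orderEmbOfFin hC i.rev))
    (fun i => by simp [C.orderEmbOfFin_mem hC]) fun i j hij => ?_).symm i
  exact toDual_lt_toDual.2 ((C.orderEmbOfFin hC).lt_iff_lt.2 (Fin.rev_lt_rev.2 hij))

lemma flagOfRev_eq_preimage_flagOf (hC' : (C.map toDual.toEmbedding).card = m) (j : ℕ) :
    flagOfRev C hC j = toDual ⁻¹' flagOf (C.map toDual.toEmbedding) hC' j := by
  unfold flagOfRev flagOf
  split_ifs with h
  · ext s
    simp only [mem_ofPred_eq, mem_preimage, orderEmbOfFin_map_toDual C hC, toDual_lt_toDual]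
    congr! 3
    simp only [Fin.val_rev]
    omega
  · rfl

theorem forall_ncard_inter_flagOfRev_le_iff [Finite α] (I : Set α) :
    (∀ j ≤ m, (I ∩ flagOfRev C hC j).ncard ≤ j) ↔
      ∀ U, IsUpperSet U → (I ∩ U).ncard ≤ (↑C ∩ U).ncard := by
  have hC' : (C.map toDual.toEmbedding).card = m := by rw [Finset.card_map, hC]
  have hcoe (D : Set αᵒᵈ) :
      ↑(C.map toDual.toEmbedding) ∩ D = ofDual ⁻¹' (↑C ∩ toDual ⁻¹' D) := by
    ext; simp
  simp only [flagOfRev_eq_preimage_flagOf C hC hC']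
  refine (forall_ncard_inter_flagOf_le_iff (C.map toDual.toEmbedding) hC' (ofDual ⁻¹' I)).trans ?_
  simp only [hcoe]
  exact ⟨fun h U hU => h _ hU.toDual, fun h D hD => h _ hD.ofDual⟩

end FlagRev

lemma Matroid.isBase_iff_indep_ncard_eq {α : Type*} {M : Matroid α} [M.RankFinite] {T B : Set α}
    (hT : M.Indep T) (hmax : ∀ I, M.Indep I → I.ncard ≤ T.ncard) :
    M.IsBase B ↔ M.Indep B ∧ B.ncard = T.ncard := by
  refine ⟨fun hB => ⟨hB.indep, ?_⟩, fun ⟨hB, hcard⟩ => ?_⟩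
  · obtain ⟨B', hB', hTB'⟩ := hT.exists_isBase_superset
    have := ncard_le_ncard hTB' hB'.finite
    have := hmax B' hB'.indep
    have := hB.ncard_eq_ncard_of_isBase hB'
    omega
  · obtain ⟨B', hB', hBB'⟩ := hB.exists_isBase_superset
    rwa [eq_of_subset_of_ncard_le hBB' (hcard ▸ hmax B' hB'.indep) hB'.finite]

section Complement

variable {α : Type*} [Finite α]

lemma ncard_compl_inter_add_ncard (B U : Set α) :
    (Bᶜ ∩ U).ncard + B.ncard = U.ncard + (B ∩ Uᶜ).ncard := by
  have hU := ncard_inter_add_ncard_sdiff_eq_ncard U B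
  have hB := ncard_inter_add_ncard_sdiff_eq_ncard B U
  rw [sdiff_eq, inter_comm U, inter_comm U] at hU
  rw [sdiff_eq] at hB
  omega

lemma ncard_compl_eq_ncard_iff {B T : Set α} : Bᶜ.ncard = T.ncard ↔ B.ncard = Tᶜ.ncard := by
  have := ncard_add_ncard_compl B
  have := ncard_add_ncard_compl T
  omega

theorem forall_isLowerSet_ncard_inter_le_iff [LE α] {B T : Set α} (h : B.ncard = T.ncard) :
    (∀ D, IsLowerSet D → (B ∩ D).ncard ≤ (T ∩ D).ncard) ↔
      ∀ U, IsUpperSet U → (Bᶜ ∩ U).ncard ≤ (Tᶜ ∩ U).ncard := by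
  refine ⟨fun hD U hU => ?_, fun hU D hD => ?_⟩
  · have := hD _ (isLowerSet_compl.2 hU)
    have := ncard_compl_inter_add_ncard B U
    have := ncard_compl_inter_add_ncard T U
    omega
  · have := hU _ hD.compl
    have := ncard_compl_inter_add_ncard B Dᶜ
    have := ncard_compl_inter_add_ncard T Dᶜ
    rw [compl_compl] at *
    omega

end Complement

theorem freedom_matroid_dual_general {α : Type*} [Fintype α] [LinearOrder α]
    (n : ℕ)
    (T : Finset α) (r : ℕ) (hT : T.card = r) (hTc : Tᶜ.card = n - r)
    (M : Matroid α) (hE : M.E = Set.univ)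
    (hInd : ∀ I : Set α, M.Indep I ↔ ∀ i ≤ r, (I ∩ flagOf T hT i).ncard ≤ i)
    (N : Matroid α) (hNE : N.E = Set.univ)
    (hNInd : ∀ I : Set α,
      N.Indep I ↔ ∀ i ≤ n - r, (I ∩ flagOfRev Tᶜ hTc i).ncard ≤ i) :
    M✶ = N := by
  have hM (I : Set α) : M.Indep I ↔ ∀ D, IsLowerSet D → (I ∩ D).ncard ≤ (↑T ∩ D).ncard :=
    (hInd I).trans (forall_ncard_inter_flagOf_le_iff T hT I)
  have hN (I : Set α) : N.Indep I ↔ ∀ U, IsUpperSet U → (I ∩ U).ncard ≤ ((↑T)ᶜ ∩ U).ncard := by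
    rw [hNInd, forall_ncard_inter_flagOfRev_le_iff, Finset.coe_compl]
  have hMBase (B : Set α) : M.IsBase B ↔ M.Indep B ∧ B.ncard = (T : Set α).ncard :=
    isBase_iff_indep_ncard_eq ((hM T).2 fun _ _ => le_rfl)
      fun I hI => by simpa using (hM I).1 hI univ isLowerSet_univ
  have hNBase (B : Set α) : N.IsBase B ↔ N.Indep B ∧ B.ncard = ((T : Set α)ᶜ).ncard :=
    isBase_iff_indep_ncard_eq ((hN _).2 fun _ _ => le_rfl)
      fun I hI => by simpa using (hN I).1 hI univ isUpperSet_univ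
  refine ext_isBase (by rw [dual_ground, hE, hNE]) fun B _ => ?_
  rw [dual_isBase_iff (by simp [hE]), hE, ← compl_eq_univ_sdiff, hMBase, hNBase,
    ncard_compl_eq_ncard_iff, hM, hN]
  exact and_congr_left fun h => by
    rw [forall_isLowerSet_ncard_inter_le_iff (ncard_compl_eq_ncard_iff.2 h), compl_compl]

/-- For a finite linearly ordered set `S` (here the whole type, with
`n` elements) and `T ⊆ S`, the dual matroid `M_T(S)✶` equals `M_{T'}(S_φ)`, where
`T' = S \ T` and `S_φ` is `S` with the reversed order.  In particular, the class of
freedom matroids is closed under duality. -/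
theorem freedom_matroid_dual {α : Type*} [Fintype α] [LinearOrder α]
    (n : ℕ) (hn : Fintype.card α = n)
    (T : Finset α) (r : ℕ) (hT : T.card = r) (hTc : Tᶜ.card = n - r)
    (M : Matroid α) (hE : M.E = Set.univ)
    (hInd : ∀ I : Set α, M.Indep I ↔ ∀ i ≤ r, (I ∩ flagOf T hT i).ncard ≤ i)
    (N : Matroid α) (hNE : N.E = Set.univ)
    (hNInd : ∀ I : Set α,
      N.Indep I ↔ ∀ i ≤ n - r, (I ∩ flagOfRev Tᶜ hTc i).ncard ≤ i) :
    M✶ = N :=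
  freedom_matroid_dual_general n T r hT hTc M hE hInd N hNE hNInd
end

section
/- Let M(S) = M(S_0,...,S_r) be a freedom matroid, where S is linearly ordered and each S_i is an initial segment of S, and let ρ be its rank function. If A ⊆ S, a ∈ A, and b ∈ S \ A satisfies b > a in S, then ρ((A \ {a}) ∪ {b}) ≥ ρ(A). -/
open Matroid Set

/-!
Every independent `I ⊆ A` has a counterpart of the same size, independent and contained in
`(A \ {a}) ∪ {b}`: either `I` avoids `a`, or `a` can be traded for `b`. The trade keeps `I`
independent because each `Sᵢ` is an initial segment, so `b ∈ Sᵢ` forces `a ∈ Sᵢ` and no count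
`|I ∩ Sᵢ|` grows. The rank `matRk` agrees with Mathlib's `eRk`, the matroid having finite rank.
-/

namespace Matroid

variable {α : Type*} {M : Matroid α}

theorem matRk_eq_toNat_eRk [M.RankFinite] (X : Set α) : matRk M X = (M.eRk X).toNat := by
  obtain ⟨I, hI⟩ := M.exists_isBasis' X
  have hmax : IsGreatest {k : ℕ | ∃ I : Set α, I ⊆ X ∧ M.Indep I ∧ I.ncard = k} I.ncard := by
    refine ⟨⟨I, hI.subset, hI.indep, rfl⟩, ?_⟩
    rintro _ ⟨J, hJX, hJ, rfl⟩
    have hJI : J.encard ≤ I.encard := hI.encard_eq_eRk ▸ hJ.encard_le_eRk_of_subset hJX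
    rw [← hJ.finite.cast_ncard_eq, ← hI.indep.finite.cast_ncard_eq] at hJI
    exact_mod_cast hJI
  rw [matRk, hmax.csSup_eq, ← hI.encard_eq_eRk, ncard_def]

theorem eRk_le_eRk_insert_sdiff_singleton {A : Set α} {a b : α} (hbA : b ∉ A)
    (hexch : ∀ I, M.Indep I → a ∈ I → b ∉ I → M.Indep (insert b (I \ {a}))) :
    M.eRk A ≤ M.eRk (insert b (A \ {a})) := by
  refine eRk_le_iff.2 fun I hIA hI ↦ ?_
  by_cases haI : a ∈ I
  · have hbI : b ∉ I := fun h ↦ hbA (hIA h)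
    rw [← encard_exchange hbI haI]
    exact (hexch I hI haI hbI).encard_le_eRk_of_subset
      (insert_subset_insert (sdiff_subset_sdiff_left hIA))
  · exact hI.encard_le_eRk_of_subset fun x hx ↦
      mem_insert_of_mem _ ⟨hIA hx, fun hxa ↦ haI (hxa ▸ hx)⟩

end Matroid

theorem Set.ncard_insert_sdiff_singleton_inter_le {α : Type*} {I G : Set α} {a b : α}
    (hI : I.Finite) (haI : a ∈ I) (hbI : b ∉ I) (hG : b ∈ G → a ∈ G) :
    (insert b (I \ {a}) ∩ G).ncard ≤ (I ∩ G).ncard := by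
  by_cases hbG : b ∈ G
  · rw [insert_inter_of_mem hbG, ← inter_sdiff_right_comm,
      ncard_exchange (s := I ∩ G) (fun h ↦ hbI h.1) ⟨haI, hG hbG⟩]
  · rw [insert_inter_of_notMem hbG]
    exact ncard_le_ncard (inter_subset_inter_left _ sdiff_subset) (hI.inter_of_left _)

theorem freedom_indep_insert_sdiff_singleton {α : Type*} [LinearOrder α] {S : Set α}
    (hS : S.Finite) {r : ℕ} {F : ℕ → Set α}
    (hinit : ∀ i ≤ r, ∀ x ∈ S, ∀ y ∈ F i, x ≤ y → x ∈ F i) {I : Set α} (hIS : I ⊆ S) (hI : ∀ i ≤ r, (I ∩ F i).ncard ≤ i) {a b : α} (haI : a ∈ I)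
    (hbI : b ∉ I) (hbS : b ∈ S) (hab : a < b) :
    insert b (I \ {a}) ⊆ S ∧ ∀ i ≤ r, (insert b (I \ {a}) ∩ F i).ncard ≤ i :=
  ⟨insert_subset hbS (sdiff_subset.trans hIS), fun i hi ↦
    (ncard_insert_sdiff_singleton_inter_le (hS.subset hIS) haI hbI
      fun hbF ↦ hinit i hi a (hIS haI) b hbF hab.le).trans (hI i hi)⟩

theorem freedom_matroid_exchange_up_general {α : Type*} [LinearOrder α]
    (S : Set α) (hS : S.Finite) (r : ℕ)
    (F : ℕ → Set α)
    (hinit : ∀ i ≤ r, ∀ x ∈ S, ∀ y ∈ F i, x ≤ y → x ∈ F i)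
    (M : Matroid α)
    (hInd : ∀ I : Set α, M.Indep I ↔ I ⊆ S ∧ ∀ i ≤ r, (I ∩ F i).ncard ≤ i)
    (A : Set α) (a : α)
    (b : α) (hb : b ∈ S \ A) (hab : a < b) :
    matRk M A ≤ matRk M ((A \ {a}) ∪ {b}) := by
  have hexch : ∀ I, M.Indep I → a ∈ I → b ∉ I → M.Indep (insert b (I \ {a})) := by
    intro I hI haI hbI
    rw [hInd] at hI ⊢
    exact freedom_indep_insert_sdiff_singleton hS hinit hI.1 hI.2 haI hbI hb.1 hab
  have : M.RankFinite := by
    obtain ⟨B, hB⟩ := M.exists_isBase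
    exact hB.rankFinite_of_finite (hS.subset ((hInd B).1 hB.indep).1)
  rw [matRk_eq_toNat_eRk, matRk_eq_toNat_eRk, union_singleton]
  exact ENat.toNat_le_toNat (eRk_le_eRk_insert_sdiff_singleton hb.2 hexch)
    (eRk_ne_top_iff.2 (M.isRkFinite_set _))

/-- Let `M(S) = M(S₀,…,S_r)` be a freedom matroid on a linearly ordered
set `S` in which each `Sᵢ` is an initial segment of `S`, with rank function `ρ`.
If `A ⊆ S`, `a ∈ A`, and `b ∈ S \ A` satisfies `b > a`, then
`ρ((A \ {a}) ∪ {b}) ≥ ρ(A)`. -/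
theorem freedom_matroid_exchange_up {α : Type*} [LinearOrder α]
    (S : Set α) (hS : S.Finite) (r : ℕ)
    (F : ℕ → Set α) (hFr : F r = S) (hchain : ∀ i < r, F i ⊂ F (i + 1))
    (hinit : ∀ i ≤ r, ∀ x ∈ S, ∀ y ∈ F i, x ≤ y → x ∈ F i)
    (M : Matroid α) (hE : M.E = S)
    (hInd : ∀ I : Set α, M.Indep I ↔ I ⊆ S ∧ ∀ i ≤ r, (I ∩ F i).ncard ≤ i)
    (A : Set α) (hA : A ⊆ S) (a : α) (ha : a ∈ A)
    (b : α) (hb : b ∈ S \ A) (hab : a < b) :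
    matRk M A ≤ matRk M ((A \ {a}) ∪ {b}) :=
  freedom_matroid_exchange_up_general S hS r F hinit M hInd A a b hb hab
end

section
/- Let M be a rank-r matroid on a linearly ordered n-element set S, and let w = w_{M(S)} be its distinguished word. Then π(w) is a basis of M, and it is the minimum basis: every basis B of M satisfies B ≥ π(w) in the Gale order on the r-element subsets of S. -/
open Matroid Set

/-- The set of positions of the ones of a 0-1 word of length `n`. -/
def ones {n : ℕ} (v : Fin n → Bool) : Finset (Fin n) :=
  Finset.univ.filter (fun i => v i = true)

/-- The distinguished word `w_{M(S)}` of a matroid `M` on the linearly ordered set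
`S = Fin n`: its `i`-th letter is `1` exactly when `ρ({e₁,…,eᵢ}) - ρ({e₁,…,e_{i-1}}) = 1`. -/
noncomputable def distWord {n : ℕ} (M : Matroid (Fin n)) : Fin n → Bool :=
  fun i => decide (matRk M {j : Fin n | j < i} < matRk M {j : Fin n | j ≤ i})

/-!
Let `G` be the set of positions at which the rank of the initial segment jumps. Adding a new
largest element `a` to a finite initial segment `X` either leaves a basis `I` of `X` a basis of
`insert a X` or extends it to the basis `insert a I`, and which case occurs is decided by
whether the rank jumps at `a`. By induction along the order, `G ∩ Iic x` is a basis of `Iic x`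
for every `x`, so `G` is a base, and every independent set `B` satisfies
`|B ∩ Iic x| ≤ rk (Iic x) = |G ∩ Iic x|`; for bases this counting inequality is exactly Gale
dominance of `B` over `G`.
-/

namespace Matroid

variable {α : Type*} {M : Matroid α} {I J X : Set α}

lemma IsBasis'.isBasis'_insert_or_insert_isBasis'_insert (hI : M.IsBasis' I X) (e : α) :
    M.IsBasis' I (insert e X) ∨ M.IsBasis' (insert e I) (insert e X) := by
  obtain ⟨J, hJ, hIJ⟩ := hI.indep.subset_isBasis'_of_subset (hI.subset.trans (subset_insert e X))
  have hJI : J ⊆ insert e I := by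
    intro x hxJ
    obtain rfl | hxX := hJ.subset hxJ
    · exact mem_insert _ _
    · exact mem_insert_of_mem _ <|
        hI.mem_of_insert_indep hxX (hJ.indep.subset (insert_subset hxJ hIJ))
  by_cases heJ : e ∈ J
  · exact .inr (hJI.antisymm (insert_subset heJ hIJ) ▸ hJ)
  · exact .inl (((subset_insert_iff_of_notMem heJ).1 hJI).antisymm hIJ ▸ hJ)

section Finite

variable [Finite α]

lemma Indep.ncard_le_ncard_of_isBasis' (hJ : M.Indep J) (hJX : J ⊆ X) (hI : M.IsBasis' I X) :
    J.ncard ≤ I.ncard :=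
  ENat.toNat_le_toNat ((hJ.encard_le_eRk_of_subset hJX).trans hI.encard_eq_eRk.ge)
    I.toFinite.encard_lt_top.ne

lemma IsBasis'.matRk_eq_ncard (hI : M.IsBasis' I X) : matRk M X = I.ncard :=
  IsGreatest.csSup_eq ⟨⟨I, hI.subset, hI.indep, rfl⟩, by
    rintro _ ⟨J, hJX, hJ, rfl⟩
    exact hJ.ncard_le_ncard_of_isBasis' hJX hI⟩

variable [LinearOrder α]

def rankJumps (M : Matroid α) : Set α := {e | matRk M (Iio e) < matRk M (Iic e)}

lemma isBasis'_rankJumps_inter_Iic_of_Iio (a : α)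
    (h : M.IsBasis' (M.rankJumps ∩ Iio a) (Iio a)) :
    M.IsBasis' (M.rankJumps ∩ Iic a) (Iic a) := by
  have ha : a ∉ M.rankJumps ∩ Iio a := fun h ↦ lt_irrefl a h.2
  rw [← Iio_insert]
  rcases h.isBasis'_insert_or_insert_isBasis'_insert a with h' | h'
  · have : a ∉ M.rankJumps := by
      simp only [rankJumps, mem_ofPred_eq, not_lt]
      rw [h.matRk_eq_ncard, ← Iio_insert, h'.matRk_eq_ncard]
    rwa [inter_insert_of_notMem this]
  · have : a ∈ M.rankJumps := by
      simp only [rankJumps, mem_ofPred_eq]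
      rw [h.matRk_eq_ncard, ← Iio_insert, h'.matRk_eq_ncard, ncard_insert_of_notMem ha]
      exact Nat.lt_succ_self _
    rwa [inter_insert_of_mem this]

lemma isBasis'_rankJumps_inter {s : Set α} (hs : IsLowerSet s) :
    M.IsBasis' (M.rankJumps ∩ s) s := by
  obtain ⟨t, rfl⟩ := s.toFinite.exists_finset_coe
  induction t using Finset.induction_on_max with
  | empty => simpa using M.empty_indep.isBasis_self.isBasis'
  | insert a t hlt ih =>
    have ht : (t : Set α) = Iio a := by
      ext x
      refine ⟨hlt x, fun hx ↦ ?_⟩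
      have := hs hx.le (Finset.mem_insert_self a t)
      exact (Finset.mem_insert.1 this).resolve_left hx.ne
    have hIio := ih (ht ▸ isLowerSet_Iio a)
    rw [ht] at hIio
    rw [Finset.coe_insert, ht, Iio_insert]
    exact isBasis'_rankJumps_inter_Iic_of_Iio a hIio

lemma isBase_rankJumps : M.IsBase M.rankJumps := by
  have h := M.isBasis'_rankJumps_inter isLowerSet_univ
  rwa [inter_univ, isBasis'_iff_isBasis_inter_ground, univ_inter, isBasis_ground_iff] at h

lemma Indep.ncard_inter_Iic_le (hI : M.Indep I) (x : α) :
    (I ∩ Iic x).ncard ≤ (M.rankJumps ∩ Iic x).ncard :=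
  (hI.subset inter_subset_left).ncard_le_ncard_of_isBasis' inter_subset_right
    (M.isBasis'_rankJumps_inter (isLowerSet_Iic x))

end Finite

end Matroid

section Gale

variable {α : Type*} [LinearOrder α]

lemma Finset.filter_lt_orderEmbOfFin (A : Finset α) (i : Fin A.card) :
    A.filter (· < A.orderEmbOfFin rfl i) =
      (Finset.Iio i).map (A.orderEmbOfFin rfl).toEmbedding := by
  ext x
  simp only [Finset.mem_filter, Finset.mem_map, Finset.mem_Iio, RelEmbedding.coe_toEmbedding]
  constructor
  · rintro ⟨hx, hlt⟩
    obtain ⟨j, rfl⟩ : x ∈ Set.range (A.orderEmbOfFin rfl) := by rwa [Finset.range_orderEmbOfFin]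
    exact ⟨j, (A.orderEmbOfFin rfl).lt_iff_lt.1 hlt, rfl⟩
  · rintro ⟨j, hj, rfl⟩
    exact ⟨A.orderEmbOfFin_mem rfl j, (A.orderEmbOfFin rfl).lt_iff_lt.2 hj⟩

lemma Finset.filter_le_orderEmbOfFin (A : Finset α) (i : Fin A.card) :
    A.filter (· ≤ A.orderEmbOfFin rfl i) =
      (Finset.Iic i).map (A.orderEmbOfFin rfl).toEmbedding := by
  ext x
  simp only [Finset.mem_filter, Finset.mem_map, Finset.mem_Iic, RelEmbedding.coe_toEmbedding]
  constructor
  · rintro ⟨hx, hle⟩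
    obtain ⟨j, rfl⟩ : x ∈ Set.range (A.orderEmbOfFin rfl) := by rwa [Finset.range_orderEmbOfFin]
    exact ⟨j, (A.orderEmbOfFin rfl).le_iff_le.1 hle, rfl⟩
  · rintro ⟨j, hj, rfl⟩
    exact ⟨A.orderEmbOfFin_mem rfl j, (A.orderEmbOfFin rfl).le_iff_le.2 hj⟩

lemma galeLE_of_card_filter_le {A B : Finset α} (hcard : A.card = B.card)
    (h : ∀ x, (B.filter (· ≤ x)).card ≤ (A.filter (· ≤ x)).card) : galeLE A B := by
  refine ⟨hcard.ge, fun k hA hB ↦ ?_⟩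
  by_contra! hlt
  set y := B.orderEmbOfFin rfl ⟨k, hB⟩
  have hsub : A.filter (· ≤ y) ⊆ A.filter (· < A.orderEmbOfFin rfl ⟨k, hA⟩) :=
    fun x hx ↦ by
      rw [Finset.mem_filter] at hx ⊢
      exact ⟨hx.1, hx.2.trans_lt hlt⟩
  have := (h y).trans (Finset.card_le_card hsub)
  rw [Finset.filter_le_orderEmbOfFin, Finset.filter_lt_orderEmbOfFin, Finset.card_map,
    Finset.card_map, Fin.card_Iic, Fin.card_Iio] at this
  omega

lemma Finset.card_filter_le_eq_ncard (s : Finset α) (x : α) :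
    (s.filter (· ≤ x)).card = ((s : Set α) ∩ Set.Iic x).ncard := by
  rw [← ncard_coe_finset, Finset.coe_filter]
  rfl

end Gale

lemma coe_ones_distWord {n : ℕ} (M : Matroid (Fin n)) :
    (ones (distWord M) : Set (Fin n)) = M.rankJumps := by
  ext i
  simp [ones, distWord, Matroid.rankJumps, Iio, Iic]

theorem distWord_is_min_basis_general {n : ℕ} (M : Matroid (Fin n)) :
    M.IsBase ↑(ones (distWord M)) ∧
    ∀ B : Finset (Fin n), M.IsBase ↑B → galeLE (ones (distWord M)) B := by
  have hG : M.IsBase ↑(ones (distWord M)) := coe_ones_distWord M ▸ M.isBase_rankJumps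
  refine ⟨hG, fun B hB ↦ galeLE_of_card_filter_le ?_ fun x ↦ ?_⟩
  · simpa using hG.ncard_eq_ncard_of_isBase hB
  · simpa [Finset.card_filter_le_eq_ncard, coe_ones_distWord] using hB.indep.ncard_inter_Iic_le x

/-- Let `M` be a rank-`r` matroid on the linearly ordered `n`-element set
`Fin n`, with distinguished word `w = w_{M(S)}`.  Then `π(w)` is a basis of `M`, and it
is the minimum basis: every basis `B` of `M` satisfies `B ≥ π(w)` in the Gale order. -/
theorem distWord_is_min_basis {n r : ℕ} (M : Matroid (Fin n)) (hE : M.E = Set.univ)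
    (hr : ∃ B : Set (Fin n), M.IsBase B ∧ B.ncard = r) :
    M.IsBase ↑(ones (distWord M)) ∧
    ∀ B : Finset (Fin n), M.IsBase ↑B → galeLE (ones (distWord M)) B :=
  distWord_is_min_basis_general M
end

section
/- Let M(S) be a rank-r matroid on an n-element linearly ordered set S. If v ≤ w_{M(S)} in W(n,r), then λ_M(σ_{A,B}) = v, where A = π(w_{M(S)}), B = π(v), and σ_{A,B} is the shuffle. -/
open Matroid Set

/-- The order on `W(n,r)`: `v ≤ w` iff `π_k(v) ≤ π_k(w)` for all `k`, where `π_k`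
is the position of the `k`-th one. -/
def wordLE {n : ℕ} (v w : Fin n → Bool) : Prop :=
  (ones v).card = (ones w).card ∧
  ∀ (k : ℕ) (hv : k < (ones v).card) (hw : k < (ones w).card),
    (ones v).orderEmbOfFin rfl ⟨k, hv⟩ ≤ (ones w).orderEmbOfFin rfl ⟨k, hw⟩

/-- `λ_M(σ) = w_{M(S_σ)}`: the word of a matroid `M` on `Fin n` relative to the
reordering `σ(e_1) < ⋯ < σ(e_n)` of the ground set; its `i`-th letter records the
rank increase `ρ({σ(e_1),…,σ(e_i)}) - ρ({σ(e_1),…,σ(e_{i-1})})`. -/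
noncomputable def lam {n : ℕ} (M : Matroid (Fin n)) (σ : Equiv.Perm (Fin n)) :
    Fin n → Bool :=
  fun i => decide
    (matRk M (⇑σ '' {j : Fin n | j < i}) < matRk M (⇑σ '' {j : Fin n | j ≤ i}))

/-! The shuffle `σ` moves every element of `B = π(v)` weakly to the right (this is `v ≤ w_M`)
and hence, by counting, every other element weakly to the left. So for `i ∈ B` the image of the
prefix before `i` lies before `σ i`, while for `i ∉ B` it contains everything before `σ i`.
The rank jumps at `σ i` exactly when `σ i` lies outside the closure of that image, and
`A = π(w_M)` consists of the elements outside the closure of their predecessors; monotonicity of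
the closure therefore puts a one of `λ_M(σ)` at `i` exactly when `i ∈ B`. -/

section Rank

variable {α : Type*} {M : Matroid α} [M.RankFinite] {X : Set α} {e : α}

lemma matRk_eq_eRk : (matRk M X : ℕ∞) = M.eRk X := by
  obtain ⟨I, hI⟩ := M.exists_isBasis' X
  have hmax : matRk M X = I.ncard := by
    refine IsGreatest.csSup_eq ⟨⟨I, hI.subset, hI.indep, rfl⟩, ?_⟩
    rintro _ ⟨J, hJX, hJ, rfl⟩
    have hJI : J.encard ≤ I.encard := hI.encard_eq_eRk ▸ hJ.encard_le_eRk_of_subset hJX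
    rwa [← hJ.finite.cast_ncard_eq, ← hI.indep.finite.cast_ncard_eq, Nat.cast_le] at hJI
  rw [hmax, hI.indep.finite.cast_ncard_eq, hI.encard_eq_eRk]

lemma matRk_lt_matRk_insert_iff : matRk M X < matRk M (insert e X) ↔ e ∈ M.E \ M.closure X := by
  rw [← Nat.cast_lt (α := ℕ∞), matRk_eq_eRk, matRk_eq_eRk]
  refine ⟨fun hlt => ⟨by_contra fun he => hlt.ne (M.eRk_insert_of_notMem_ground X he).symm,
    fun he => hlt.ne ?_⟩, fun he => ?_⟩
  · rw [← eRk_insert_closure_eq, insert_eq_of_mem he, eRk_closure_eq]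
  · rw [eRk_insert_eq_add_one he]
    exact ENat.lt_add_one_iff (eRk_ne_top_iff.2 (M.isRkFinite_set X)) |>.2 le_rfl

end Rank

section Shuffle

variable {α : Type*} [LinearOrder α] {σ : Equiv.Perm α}

lemma Finset.le_apply_of_orderEmbOfFin_le {s t : Finset α} (hst : s.card = t.card)
    (hle : ∀ (k : ℕ) (hs : k < s.card) (ht : k < t.card),
      s.orderEmbOfFin rfl ⟨k, hs⟩ ≤ t.orderEmbOfFin rfl ⟨k, ht⟩)
    (hmaps : MapsTo σ s t) (hmono : StrictMonoOn σ s) {x : α} (hx : x ∈ s) : x ≤ σ x := by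
  obtain ⟨k, rfl⟩ : x ∈ Set.range (s.orderEmbOfFin rfl) := by rwa [Finset.range_orderEmbOfFin]
  have hσ : (fun k => σ (s.orderEmbOfFin rfl k)) = t.orderEmbOfFin hst.symm :=
    Finset.orderEmbOfFin_unique hst.symm (fun k => hmaps (s.orderEmbOfFin_mem rfl k))
      fun a b hab => hmono (s.orderEmbOfFin_mem rfl a) (s.orderEmbOfFin_mem rfl b)
        ((s.orderEmbOfFin rfl).strictMono hab)
  have := hle k k.2 (hst ▸ k.2)
  rw [congrFun hσ k]
  simpa [Finset.orderEmbOfFin_apply] using this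

variable {s : Set α}

lemma Equiv.Perm.apply_le_of_notMem [LocallyFiniteOrderBot α] (hs : ∀ x ∈ s, x ≤ σ x)
    (hmono : MonotoneOn σ sᶜ) {x : α} (hx : x ∉ s) : σ x ≤ x := by
  classical
  by_contra! hlt
  have hsub : (Finset.Iic x).map σ.symm.toEmbedding ⊆ Finset.Iio x := by
    simp only [Finset.subset_iff, Finset.mem_map_equiv, Equiv.symm_symm, Finset.mem_Iic,
      Finset.mem_Iio]
    intro z hz
    by_cases hzs : z ∈ s
    · exact ((hs z hzs).trans hz).lt_of_ne fun hzx => hx (hzx ▸ hzs)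
    · exact lt_of_not_ge fun hxz => ((hmono hx hzs hxz).trans hz).not_gt hlt
  have := Finset.card_le_card hsub
  rw [Finset.card_map, Finset.Iic_eq_cons_Iio, Finset.card_cons] at this
  omega

lemma Equiv.Perm.image_Iio_subset_Iio (hs : ∀ x ∈ s, x ≤ σ x) (hs' : ∀ x ∉ s, σ x ≤ x)
    (hmono : MonotoneOn σ s) {i : α} (hi : i ∈ s) : σ '' Iio i ⊆ Iio (σ i) := by
  rintro _ ⟨x, hxi : x < i, rfl⟩
  by_cases hx : x ∈ s
  · exact (hmono hx hi hxi.le).lt_of_ne (σ.injective.ne hxi.ne)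
  · exact (hs' x hx).trans_lt (hxi.trans_le (hs i hi))

lemma Equiv.Perm.Iio_subset_image_Iio (hs : ∀ x ∈ s, x ≤ σ x) (hs' : ∀ x ∉ s, σ x ≤ x)
    (hmono : MonotoneOn σ sᶜ) {i : α} (hi : i ∉ s) : Iio (σ i) ⊆ σ '' Iio i := by
  intro z (hz : z < σ i)
  refine ⟨σ.symm z, ?_, σ.apply_symm_apply z⟩
  by_cases hzs : σ.symm z ∈ s
  · have hz' : σ (σ.symm z) < σ i := by rwa [σ.apply_symm_apply]
    exact (hs _ hzs).trans_lt (hz'.trans_le (hs' i hi))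
  · exact lt_of_not_ge fun hiz => (hmono hi hzs hiz).not_gt (by rwa [σ.apply_symm_apply])

end Shuffle

lemma lam_eq_true_iff {n : ℕ} (M : Matroid (Fin n)) (σ : Equiv.Perm (Fin n)) (i : Fin n) :
    lam M σ i = true ↔ σ i ∈ M.E \ M.closure (σ '' Iio i) := by
  rw [lam, decide_eq_true_iff, ← matRk_lt_matRk_insert_iff, ← image_insert_eq, Iio_insert]
  rfl

lemma mem_ones_lam_one_iff {n : ℕ} (M : Matroid (Fin n)) (y : Fin n) :
    y ∈ ones (lam M 1) ↔ y ∈ M.E \ M.closure (Iio y) := by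
  simp [ones, lam_eq_true_iff]

theorem lam_shuffle_eq_general {n : ℕ} (M : Matroid (Fin n))
    (v : Fin n → Bool)
    (hvw : wordLE v (lam M 1))
    (σ : Equiv.Perm (Fin n))
    (hmap : ⇑σ '' (↑(ones v) : Set (Fin n)) = ↑(ones (lam M 1)))
    (hmono : ∀ x ∈ ones v, ∀ y ∈ ones v, x ≤ y → σ x ≤ σ y)
    (hmono' : ∀ x ∉ ones v, ∀ y ∉ ones v, x ≤ y → σ x ≤ σ y) :
    lam M σ = v := by
  have hmaps : MapsTo σ (ones v) (ones (lam M 1)) := fun x hx => hmap ▸ mem_image_of_mem σ hx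
  have hle : ∀ x ∈ ones v, x ≤ σ x := fun x =>
    Finset.le_apply_of_orderEmbOfFin_le hvw.1 hvw.2 hmaps
      (MonotoneOn.strictMonoOn_of_injOn hmono σ.injective.injOn)
  have hge : ∀ x ∉ ones v, σ x ≤ x := fun x => σ.apply_le_of_notMem hle hmono'
  funext i
  rw [Bool.eq_iff_iff, lam_eq_true_iff]
  by_cases hi : i ∈ ones v
  · have hA : σ i ∈ M.E \ M.closure (Iio (σ i)) := (mem_ones_lam_one_iff M (σ i)).1 (hmaps hi)
    refine iff_of_true (sdiff_subset_sdiff_right (M.closure_subset_closure ?_) hA)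
      (by simpa [ones] using hi)
    exact σ.image_Iio_subset_Iio hle hge hmono hi
  · have hA : σ i ∉ M.E \ M.closure (Iio (σ i)) := by
      rw [← mem_ones_lam_one_iff, ← Finset.mem_coe, ← hmap, σ.injective.mem_set_image]
      exact hi
    refine iff_of_false (fun h => hA (sdiff_subset_sdiff_right (M.closure_subset_closure ?_) h))
      (by simpa [ones] using hi)
    exact σ.Iio_subset_image_Iio hle hge hmono' hi

/-- Let `M(S)` be a rank-`r` matroid on the `n`-element linearly ordered
set `Fin n`, with distinguished word `w_{M(S)} = λ_M(1)`.  If `v ≤ w_{M(S)}` in `W(n,r)`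
then `λ_M(σ_{A,B}) = v`, where `A = π(w_{M(S)})`, `B = π(v)` and `σ_{A,B}` is the
shuffle: the unique permutation mapping `B` onto `A` (and its complement onto the
complement of `A`) order-preservingly on both parts. -/
theorem lam_shuffle_eq {n r : ℕ} (M : Matroid (Fin n)) (hE : M.E = Set.univ)
    (hr : ∃ B : Set (Fin n), M.IsBase B ∧ B.ncard = r)
    (v : Fin n → Bool) (hvr : (ones v).card = r)
    (hvw : wordLE v (lam M 1))
    (σ : Equiv.Perm (Fin n))
    (hmap : ⇑σ '' (↑(ones v) : Set (Fin n)) = ↑(ones (lam M 1)))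
    (hmono : ∀ x ∈ ones v, ∀ y ∈ ones v, x ≤ y → σ x ≤ σ y)
    (hmap' : ⇑σ '' (↑(ones v) : Set (Fin n))ᶜ = (↑(ones (lam M 1)) : Set (Fin n))ᶜ)
    (hmono' : ∀ x ∉ ones v, ∀ y ∉ ones v, x ≤ y → σ x ≤ σ y) :
    lam M σ = v :=
  lam_shuffle_eq_general M v hvw σ hmap hmono hmono'
end

section
/- If M is the freedom matroid M_w for some word w ∈ W(n,r), then the image of λ_M : S_n → W(n,r) is the principal order ideal { v ∈ W(n,r) : v ≤ w }. -/
open Matroid Set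

/-- The flag on `Fin n` determined by a word `w` with `r` ones: `T_r` is everything,
and `T_{k-1} = { s : s < e_{π_k(w)} }` for `1 ≤ k ≤ r`. -/
def flagOfWord {n : ℕ} (w : Fin n → Bool) (i : ℕ) : Set (Fin n) :=
  if h : i < (ones w).card
    then {s : Fin n | s < (ones w).orderEmbOfFin rfl ⟨i, h⟩} else Set.univ

/-!
Write `c_v(m)` for the number of ones of the word `v` among its first `m` letters. With equal
numbers of ones, `v ≤ w` says exactly that `c_w(m) ≤ c_v(m)` for every `m`, and `λ_M(σ)` is the
word with `c_{λ_M(σ)}(m) = rk_M(σ[0, m))`.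

In `M_w` every `m`-element set `X` has rank at least `c := c_w(m)`: any `c` of its elements at
positions `≥ m - c` are independent, because the `i`-th one of `w` sits at a position `≤ m - c + i`
for `i < c`. Hence `λ_M(σ) ≤ w`. Conversely, for `v ≤ w` let `σ` send the ones of `v` increasingly
onto the ones of `w` and the zeros increasingly onto the zeros. Then `σ[0, m)` contains `c_v(m)`
ones of `w`, which are independent, and lies in the flag set `T_{c_v(m)}`, of rank `≤ c_v(m)`;
so `λ_M(σ) = v`.
-/

namespace Finset

variable {n : ℕ}

def countBelow (s : Finset (Fin n)) (m : ℕ) : ℕ := (s.filter fun i : Fin n => (i : ℕ) < m).card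

variable (s : Finset (Fin n))

lemma countBelow_mono : Monotone s.countBelow := fun _ _ h =>
  card_le_card (monotone_filter_right s fun _ _ hi => hi.trans_le h)

lemma countBelow_le (m : ℕ) : s.countBelow m ≤ m :=
  (card_le_card (filter_subset_filter _ (subset_univ s))).trans
    (Fin.card_filter_val_lt.trans_le (min_le_right _ _))

lemma countBelow_le_card (m : ℕ) : s.countBelow m ≤ s.card :=
  card_filter_le _ _

lemma countBelow_self : s.countBelow n = s.card := by
  rw [countBelow, filter_true_of_mem fun i _ => i.isLt]

lemma countBelow_compl {m : ℕ} (hm : m ≤ n) : sᶜ.countBelow m = m - s.countBelow m := by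
  have h : s.countBelow m + sᶜ.countBelow m = m := by
    rw [countBelow, countBelow, ← card_union_of_disjoint
      (disjoint_filter_filter disjoint_compl_right), ← filter_union, union_compl,
      Fin.card_filter_val_lt, min_eq_right hm]
  omega

lemma countBelow_succ (i : Fin n) :
    s.countBelow (i + 1) = s.countBelow i + if i ∈ s then 1 else 0 := by
  have : s.filter (fun j : Fin n => (j : ℕ) < i + 1) =
      s.filter (fun j => j = i) ∪ s.filter (fun j : Fin n => (j : ℕ) < i) := by
    rw [← filter_or]
    refine filter_congr fun j _ => ?_
    rw [Fin.ext_iff]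
    omega
  rw [countBelow, countBelow, this, card_union_of_disjoint
    (disjoint_filter.mpr fun j _ h => by rw [h]; exact lt_irrefl _), filter_eq', add_comm]
  split_ifs <;> simp

lemma countBelow_orderEmbOfFin {k : ℕ} (h : s.card = k) (i : Fin k) :
    s.countBelow (s.orderEmbOfFin h i) = i := by
  have : s.filter (fun x : Fin n => (x : ℕ) < s.orderEmbOfFin h i) =
      (Iio i).map (s.orderEmbOfFin h).toEmbedding := by
    ext x
    simp only [mem_filter, mem_map, mem_Iio, RelEmbedding.coe_toEmbedding, Fin.val_fin_lt]
    constructor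
    · rintro ⟨hx, hxi⟩
      obtain ⟨j, rfl⟩ : x ∈ Set.range (s.orderEmbOfFin h) := by rwa [range_orderEmbOfFin]
      exact ⟨j, (s.orderEmbOfFin h).lt_iff_lt.mp hxi, rfl⟩
    · rintro ⟨j, hj, rfl⟩
      exact ⟨orderEmbOfFin_mem s h j, (s.orderEmbOfFin h).lt_iff_lt.mpr hj⟩
  rw [countBelow, this, card_map, Fin.card_Iio]

lemma orderEmbOfFin_lt_iff {k : ℕ} (h : s.card = k) (i : Fin k) (m : ℕ) :
    (s.orderEmbOfFin h i : ℕ) < m ↔ (i : ℕ) < s.countBelow m := by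
  have hi := s.countBelow_orderEmbOfFin h i
  constructor
  · intro hm
    have := s.countBelow_succ (s.orderEmbOfFin h i)
    rw [if_pos (orderEmbOfFin_mem s h i), hi] at this
    have := s.countBelow_mono (show _ + 1 ≤ m from hm)
    omega
  · intro him
    by_contra! hm
    have := s.countBelow_mono hm
    omega

def orderIsoOfCardEq {α : Type*} [LinearOrder α] (s t : Finset α) (h : s.card = t.card) :
    s ≃o t :=
  (s.orderIsoOfFin rfl).symm.trans (t.orderIsoOfFin h.symm)

def sortedPerm {α : Type*} [Fintype α] [LinearOrder α] (s t : Finset α) (h : s.card = t.card) :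
    Equiv.Perm α :=
  Equiv.subtypeCongr (s.orderIsoOfCardEq t h).toEquiv
    ((Equiv.subtypeEquivRight fun _ => mem_compl.symm).trans
      ((sᶜ.orderIsoOfCardEq tᶜ (by rw [card_compl, card_compl, h])).toEquiv.trans
        (Equiv.subtypeEquivRight fun _ => mem_compl)))

section SortedPerm

variable {α : Type*} [Fintype α] [LinearOrder α] {s t : Finset α} {h : s.card = t.card} {y : α}

lemma sortedPerm_of_mem (hy : y ∈ s) :
    sortedPerm s t h y = s.orderIsoOfCardEq t h ⟨y, hy⟩ := by
  simp [sortedPerm, Equiv.subtypeCongr, hy]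

lemma sortedPerm_of_notMem (hy : y ∉ s) :
    sortedPerm s t h y = sᶜ.orderIsoOfCardEq tᶜ (by rw [card_compl, card_compl, h])
      ⟨y, mem_compl.mpr hy⟩ := by
  simp [sortedPerm, Equiv.subtypeCongr, hy]
  rfl

lemma sortedPerm_mem (hy : y ∈ s) : sortedPerm s t h y ∈ t := by
  rw [sortedPerm_of_mem hy]; exact Subtype.prop _

end SortedPerm

variable {n : ℕ} {s t : Finset (Fin n)}

lemma orderIsoOfCardEq_lt (h : s.card = t.card) (y : s) {m b : ℕ} (hy : (y : ℕ) < m)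
    (hst : s.countBelow m ≤ t.countBelow b) : ((s.orderIsoOfCardEq t h y : Fin n) : ℕ) < b := by
  set j := (s.orderIsoOfFin rfl).symm y
  have hyj : (y : Fin n) = s.orderEmbOfFin rfl j := by
    rw [← coe_orderIsoOfFin_apply, OrderIso.apply_symm_apply]
  have hj := (s.orderEmbOfFin_lt_iff rfl j m).mp (hyj ▸ hy)
  rw [orderIsoOfCardEq, OrderIso.trans_apply, coe_orderIsoOfFin_apply]
  exact (t.orderEmbOfFin_lt_iff h.symm j b).mpr (hj.trans_le hst)

lemma sortedPerm_lt (h : s.card = t.card) {y : Fin n} {m b : ℕ} (hy : (y : ℕ) < m)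
    (hst : s.countBelow m ≤ t.countBelow b) (hst' : sᶜ.countBelow m ≤ tᶜ.countBelow b) :
    (sortedPerm s t h y : ℕ) < b := by
  by_cases hys : y ∈ s
  · rw [sortedPerm_of_mem hys]
    exact orderIsoOfCardEq_lt h ⟨y, hys⟩ hy hst
  · rw [sortedPerm_of_notMem hys]
    exact orderIsoOfCardEq_lt _ ⟨y, _⟩ hy hst'

end Finset

lemma Fin.ncard_setOf_val_lt (n m : ℕ) : {i : Fin n | (i : ℕ) < m}.ncard = min n m := by
  rw [← Fin.card_filter_val_lt, ← ncard_coe_finset, Finset.coe_filter]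
  simp

lemma wordLE_iff_countBelow {n : ℕ} {v w : Fin n → Bool} :
    wordLE v w ↔ (ones v).card = (ones w).card ∧
      ∀ m ≤ n, (ones w).countBelow m ≤ (ones v).countBelow m := by
  refine and_congr_right fun hc => ⟨fun hle m _ => ?_, fun h k hv hw => ?_⟩
  · by_contra! hlt
    set k := (ones v).countBelow m
    have hw : k < (ones w).card := hlt.trans_le ((ones w).countBelow_le_card m)
    have hv : k < (ones v).card := hc ▸ hw
    have hpw := ((ones w).orderEmbOfFin_lt_iff rfl ⟨k, hw⟩ m).mpr hlt
    have hqv := ((ones v).orderEmbOfFin_lt_iff rfl ⟨k, hv⟩ m).mp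
      ((Fin.le_def.mp (hle k hv hw)).trans_lt hpw)
    exact lt_irrefl _ hqv
  · set p := (ones w).orderEmbOfFin rfl ⟨k, hw⟩
    have hpw : k < (ones w).countBelow (p + 1) :=
      ((ones w).orderEmbOfFin_lt_iff rfl ⟨k, hw⟩ _).mp (Nat.lt_succ_self _)
    have hqv := ((ones v).orderEmbOfFin_lt_iff rfl ⟨k, hv⟩ (p + 1)).mpr (hpw.trans_le (h _ p.isLt))
    exact Fin.le_def.mpr (Nat.lt_succ_iff.mp hqv)

lemma eq_of_countBelow_ones_eq {n : ℕ} {v v' : Fin n → Bool}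
    (h : ∀ m ≤ n, (ones v).countBelow m = (ones v').countBelow m) : v = v' := by
  funext i
  have hi := (ones v).countBelow_succ i
  rw [h _ i.isLt, h _ i.isLt.le, (ones v').countBelow_succ i] at hi
  have : i ∈ ones v ↔ i ∈ ones v' := by split_ifs at hi <;> simp_all
  rw [Bool.eq_iff_iff]
  simpa [ones] using this

section MatRk

variable {α : Type*} [Finite α] {M : Matroid α} {I X Y : Set α}

lemma cast_matRk (M : Matroid α) (X : Set α) : (matRk M X : ℕ∞) = M.eRk X := by
  obtain ⟨I, hI⟩ := M.exists_isBasis' X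
  have hgreatest : IsGreatest {k | ∃ J, J ⊆ X ∧ M.Indep J ∧ J.ncard = k} I.ncard := by
    refine ⟨⟨I, hI.subset, hI.indep, rfl⟩, ?_⟩
    rintro _ ⟨J, hJX, hJ, rfl⟩
    have := hJ.encard_le_eRk_of_subset hJX
    rw [← hI.encard_eq_eRk, ← J.toFinite.cast_ncard_eq, ← I.toFinite.cast_ncard_eq] at this
    exact_mod_cast this
  rw [matRk, hgreatest.csSup_eq, I.toFinite.cast_ncard_eq, hI.encard_eq_eRk]

lemma Matroid.Indep.ncard_le_matRk (hI : M.Indep I) (hIX : I ⊆ X) : I.ncard ≤ matRk M X := by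
  have := hI.encard_le_eRk_of_subset hIX
  rwa [← cast_matRk, ← I.toFinite.cast_ncard_eq, Nat.cast_le] at this

lemma matRk_le_of_forall_indep {k : ℕ} (h : ∀ I ⊆ X, M.Indep I → I.ncard ≤ k) :
    matRk M X ≤ k := by
  have : M.eRk X ≤ k := Matroid.eRk_le_iff.mpr fun I hIX hI => by
    rw [← I.toFinite.cast_ncard_eq]; exact_mod_cast h I hIX hI
  rwa [← cast_matRk, Nat.cast_le] at this

lemma matRk_mono (hXY : X ⊆ Y) : matRk M X ≤ matRk M Y := by
  have := M.eRk_mono hXY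
  rwa [← cast_matRk, ← cast_matRk, Nat.cast_le] at this

lemma matRk_insert_le_add_one (M : Matroid α) (e : α) (X : Set α) :
    matRk M (insert e X) ≤ matRk M X + 1 := by
  have := M.eRk_insert_le_add_one e X
  rw [← cast_matRk, ← cast_matRk] at this
  exact_mod_cast this

lemma matRk_empty (M : Matroid α) : matRk M ∅ = 0 := by
  have := M.eRk_empty
  rwa [← cast_matRk, Nat.cast_eq_zero] at this

end MatRk

lemma countBelow_ones_lam {n : ℕ} (M : Matroid (Fin n)) (σ : Equiv.Perm (Fin n)) {m : ℕ}
    (hm : m ≤ n) : (ones (lam M σ)).countBelow m = matRk M (σ '' {j : Fin n | (j : ℕ) < m}) := by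
  induction m with
  | zero => simp [Finset.countBelow, matRk_empty]
  | succ m ih =>
    set i : Fin n := ⟨m, hm⟩
    set P : Set (Fin n) := {j | (j : ℕ) < m}
    have hprefix : {j : Fin n | (j : ℕ) < m + 1} = insert i P := by
      ext j; simp [P, i, Fin.ext_iff]; omega
    have hmem : i ∈ ones (lam M σ) ↔ matRk M (σ '' P) < matRk M (σ '' insert i P) := by
      have hlt : {j : Fin n | j < i} = P := by ext; simp [P, i, Fin.lt_def]
      have hle : {j : Fin n | j ≤ i} = insert i P := by
        rw [← hprefix]; ext; simp [i, Fin.le_def]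
      simp [ones, lam, hlt, hle]
    have hmono := matRk_mono (M := M) (image_mono (f := σ) (subset_insert i P))
    have hstep := matRk_insert_le_add_one M (σ i) (σ '' P)
    rw [← image_insert_eq] at hstep
    rw [(ones (lam M σ)).countBelow_succ i, ih (Nat.le_of_succ_le hm), hprefix]
    split_ifs with h
    · have := hmem.mp h; omega
    · have := mt hmem.mpr h; omega

def IsFreedomMatroid {n : ℕ} (M : Matroid (Fin n)) (w : Fin n → Bool) : Prop :=
  ∀ I : Set (Fin n), M.Indep I ↔ ∀ i ≤ (ones w).card, (I ∩ flagOfWord w i).ncard ≤ i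

section FlagOfWord

variable {n : ℕ} (w : Fin n → Bool)

lemma flagOfWord_card : flagOfWord w (ones w).card = univ :=
  dif_neg (lt_irrefl _)

lemma flagOfWord_of_lt {i : ℕ} (hi : i < (ones w).card) :
    flagOfWord w i = {s | s < (ones w).orderEmbOfFin rfl ⟨i, hi⟩} :=
  dif_pos hi

end FlagOfWord

namespace IsFreedomMatroid

open Finset (countBelow_self countBelow_compl sortedPerm sortedPerm_lt sortedPerm_mem)

variable {n : ℕ} {w : Fin n → Bool} {M : Matroid (Fin n)} (hM : IsFreedomMatroid M w)
include hM

lemma matRk_le_of_subset_flagOfWord {i : ℕ} (hi : i ≤ (ones w).card) {X : Set (Fin n)}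
    (hX : X ⊆ flagOfWord w i) : matRk M X ≤ i :=
  matRk_le_of_forall_indep fun I hIX hI => by
    simpa [inter_eq_self_of_subset_left (hIX.trans hX)] using (hM I).mp hI i hi

lemma matRk_le_card (X : Set (Fin n)) : matRk M X ≤ (ones w).card :=
  hM.matRk_le_of_subset_flagOfWord le_rfl ((flagOfWord_card w).symm ▸ subset_univ X)

lemma indep_ones : M.Indep (ones w : Set (Fin n)) := by
  refine (hM _).mpr fun i hi => ?_
  rcases hi.lt_or_eq with hi | rfl
  · have : (ones w : Set (Fin n)) ∩ flagOfWord w i = ↑((ones w).filter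
        fun x : Fin n => (x : ℕ) < (ones w).orderEmbOfFin rfl ⟨i, hi⟩) := by
      ext; simp [flagOfWord_of_lt _ hi]
    rw [this, ncard_coe_finset]
    exact ((ones w).countBelow_orderEmbOfFin rfl ⟨i, hi⟩).le
  · rw [flagOfWord_card, inter_univ, ncard_coe_finset]

lemma countBelow_le_matRk (X : Set (Fin n)) : (ones w).countBelow X.ncard ≤ matRk M X := by
  set m := X.ncard
  set c := (ones w).countBelow m
  have hmn : m ≤ n := (ncard_le_card X).trans_eq (Nat.card_fin n)
  have hcm := (ones w).countBelow_le m
  obtain ⟨J, hJX, hJc⟩ : ∃ J ⊆ X \ {s : Fin n | (s : ℕ) < m - c}, J.ncard = c := by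
    refine exists_subset_card_eq ?_
    have h1 := ncard_le_ncard_sdiff_add_ncard X {s : Fin n | (s : ℕ) < m - c}
    have h2 := Fin.ncard_setOf_val_lt n (m - c)
    omega
  refine hJc ▸ Matroid.Indep.ncard_le_matRk ((hM J).mpr fun i hi => ?_) (hJX.trans sdiff_subset)
  rcases le_or_gt c i with hci | hic
  · exact (ncard_le_ncard inter_subset_left).trans (hJc ▸ hci)
  have hiw : i < (ones w).card := hic.trans_le ((ones w).countBelow_le_card m)
  set p := (ones w).orderEmbOfFin rfl ⟨i, hiw⟩
  have hpi : (ones w).countBelow p = i := (ones w).countBelow_orderEmbOfFin rfl ⟨i, hiw⟩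
  have hpm : (p : ℕ) < m := ((ones w).orderEmbOfFin_lt_iff rfl ⟨i, hiw⟩ m).mpr hic
  -- `p ≤ m - c + i`: `w` has `p - i` zeros below `p` and `m - c` zeros below `m`
  have hzeros := (ones w)ᶜ.countBelow_mono hpm.le
  rw [Finset.countBelow_compl _ p.isLt.le, Finset.countBelow_compl _ hmn, hpi] at hzeros
  have hip := hpi ▸ (ones w).countBelow_le p
  calc (J ∩ flagOfWord w i).ncard ≤ (Ico (m - c) (p : ℕ)).ncard := by
        refine ncard_le_ncard_of_injOn Fin.val (fun y hy => ?_) Fin.val_injective.injOn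
        have hyX := hJX hy.1
        rw [flagOfWord_of_lt w hiw] at hy
        exact ⟨not_lt.mp hyX.2, Fin.lt_def.mp hy.2⟩
    _ = p - (m - c) := ncard_Ico_nat _ _
    _ ≤ i := by omega

lemma wordLE_lam (σ : Equiv.Perm (Fin n)) : wordLE (lam M σ) w := by
  have hcount : ∀ m ≤ n, (ones w).countBelow m ≤ (ones (lam M σ)).countBelow m := fun m hm => by
    have := hM.countBelow_le_matRk (σ '' {j : Fin n | (j : ℕ) < m})
    rwa [ncard_image_of_injective _ σ.injective, Fin.ncard_setOf_val_lt, min_eq_right hm,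
      ← countBelow_ones_lam M σ hm] at this
  refine wordLE_iff_countBelow.mpr ⟨le_antisymm ?_ ?_, hcount⟩
  · rw [← countBelow_self, countBelow_ones_lam M σ le_rfl]
    exact hM.matRk_le_card _
  · simpa only [countBelow_self] using hcount n le_rfl

lemma matRk_image_sortedPerm {v : Fin n → Bool} (hc : (ones v).card = (ones w).card)
    (hvw : ∀ m ≤ n, (ones w).countBelow m ≤ (ones v).countBelow m) {m : ℕ} (hm : m ≤ n) :
    matRk M (sortedPerm (ones v) (ones w) hc '' {j : Fin n | (j : ℕ) < m}) =
      (ones v).countBelow m := by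
  set σ := sortedPerm (ones v) (ones w) hc
  set c := (ones v).countBelow m
  refine le_antisymm ?_ ?_
  · rcases (show c ≤ (ones v).card from (ones v).countBelow_le_card m).lt_or_eq with hcw | hcw
    · rw [hc] at hcw
      set b := (ones w).orderEmbOfFin rfl ⟨c, hcw⟩
      have hbc : (ones w).countBelow b = c := (ones w).countBelow_orderEmbOfFin rfl ⟨c, hcw⟩
      have hmb : m ≤ b := not_lt.mp fun hbm =>
        (((ones w).orderEmbOfFin_lt_iff rfl ⟨c, hcw⟩ m).mp hbm).not_ge (hvw m hm)
      refine hM.matRk_le_of_subset_flagOfWord hcw.le ?_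
      rintro _ ⟨y, hy, rfl⟩
      rw [flagOfWord_of_lt w hcw, mem_ofPred_eq, Fin.lt_def]
      refine sortedPerm_lt hc hy hbc.ge ?_
      rw [countBelow_compl _ hm, countBelow_compl _ b.isLt.le, hbc]
      omega
    · rw [hcw, hc]
      exact hM.matRk_le_card _
  · set F := (ones v).filter fun i : Fin n => (i : ℕ) < m
    have hF : σ '' F ⊆ ones w := by
      rintro _ ⟨y, hy, rfl⟩
      exact sortedPerm_mem (Finset.mem_filter.mp hy).1
    have := (hM.indep_ones.subset hF).ncard_le_matRk
      (image_mono fun y hy => (Finset.mem_filter.mp hy).2)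
    rwa [ncard_image_of_injective _ σ.injective, ncard_coe_finset] at this

lemma lam_sortedPerm {v : Fin n → Bool} (hc : (ones v).card = (ones w).card)
    (hvw : ∀ m ≤ n, (ones w).countBelow m ≤ (ones v).countBelow m) :
    lam M (sortedPerm (ones v) (ones w) hc) = v :=
  eq_of_countBelow_ones_eq fun _ hm =>
    (countBelow_ones_lam M _ hm).trans (hM.matRk_image_sortedPerm hc hvw hm)

end IsFreedomMatroid

theorem lam_image_eq_principal_ideal_general {n r : ℕ} (w : Fin n → Bool)
    (hwr : (ones w).card = r)
    (M : Matroid (Fin n))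
    (hInd : ∀ I : Set (Fin n),
      M.Indep I ↔ ∀ i ≤ r, (I ∩ flagOfWord w i).ncard ≤ i) :
    ∀ v : Fin n → Bool, (∃ σ : Equiv.Perm (Fin n), lam M σ = v) ↔ wordLE v w := by
  subst hwr
  intro v
  constructor
  · rintro ⟨σ, rfl⟩
    exact IsFreedomMatroid.wordLE_lam hInd σ
  · intro hvw
    obtain ⟨hc, hcount⟩ := wordLE_iff_countBelow.mp hvw
    exact ⟨_, IsFreedomMatroid.lam_sortedPerm hInd hc hcount⟩

/-- If `M` is the freedom matroid `M_w` for a word `w ∈ W(n,r)`, then the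
image of `λ_M : S_n → W(n,r)` is the principal order ideal `{ v ∈ W(n,r) : v ≤ w }`. -/
theorem lam_image_eq_principal_ideal {n r : ℕ} (w : Fin n → Bool)
    (hwr : (ones w).card = r)
    (M : Matroid (Fin n)) (hE : M.E = Set.univ)
    (hInd : ∀ I : Set (Fin n),
      M.Indep I ↔ ∀ i ≤ r, (I ∩ flagOfWord w i).ncard ≤ i) :
    ∀ v : Fin n → Bool, (∃ σ : Equiv.Perm (Fin n), lam M σ = v) ↔ wordLE v w :=
  lam_image_eq_principal_ideal_general w hwr M hInd
end
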